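/- arXiv:2310.07906 — 6 statements merged into one kernel-verified Lean document; each statement's English description precedes it below -/
import Mathlib

section
/- Consider the nonlinear system ż(t) = f(z(t), d(t)) on ℝⁿ with initial datum z(0) = z₀, where f : ℝⁿ × ℝᵐ → ℝⁿ is continuous, satisfies f(0,0) = 0, and d ∈ L^∞_loc(ℝ≥0; ℝᵐ). Suppose the system admits an FTISS Lyapunov function, i.e., there exist a continuously differentiable V : ℝⁿ → ℝ≥0, functions μ₁, μ₂ of class K∞, a function χ of class K, and constants c > 0 and θ ∈ (0,1) such that μ₁(|x|) ≤ V(x) ≤ μ₂(|x|) for all x ∈ ℝⁿ, and DV(z)·f(z,d) ≤ −c V(z)^θ whenever |z| ≥ χ(|d|). Then the system is FTISS: there exist ϑ of class K and β of class GKL such that every solution z : ℝ≥0 → ℝⁿ of the system satisfies |z(t)| ≤ β(|z₀|, t) + ϑ(ess sup_{s∈(0,t)} |d(s)|) for all t ≥ 0. -/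
/-!
As long as `V (z t)` exceeds `μ₂ (χ ‖d‖∞)`, the state satisfies `‖z t‖ ≥ χ ‖d t‖`, so
`(V ∘ z)' ≤ -c (V ∘ z) ^ θ`. Integrating `(V ^ (1 - θ))' ≤ -c (1 - θ)` shows that `V ∘ z`
stays below the solution `y` of `ẏ = -c y ^ θ`, `y 0 = V (z 0)`, which vanishes in finite
time, until it drops to that level, and it cannot cross the level again. Hence
`V (z t) ≤ max (y t) (μ₂ (χ ‖d‖∞))`; applying `μ₁⁻¹` gives `β = μ₁⁻¹ ∘ y` (started at
`μ₂ s`) and `ϑ = μ₁⁻¹ ∘ μ₂ ∘ χ`.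
-/

open MeasureTheory Set Filter

/-- Comparison functions are modelled on `ℝ`, all conditions being imposed on `[0, ∞)`. -/
def ClassK (ϑ : ℝ → ℝ) : Prop :=
  ContinuousOn ϑ (Ici 0) ∧ StrictMonoOn ϑ (Ici 0) ∧ ϑ 0 = 0 ∧ ∀ s ∈ Ici (0:ℝ), 0 ≤ ϑ s

def ClassKInf (ϑ : ℝ → ℝ) : Prop :=
  ClassK ϑ ∧ Tendsto ϑ atTop atTop

def ClassGKL (β : ℝ → ℝ → ℝ) : Prop :=
  (∀ s ∈ Ici (0:ℝ), ∀ t ∈ Ici (0:ℝ), 0 ≤ β s t) ∧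
  ClassK (fun s => β s 0) ∧
  ∀ s > (0:ℝ), ∃ T ≥ (0:ℝ), ∀ t ≥ T, β s t = 0

open Function

namespace ClassK

variable {φ ψ : ℝ → ℝ}

lemma nonneg (h : ClassK φ) {s : ℝ} (hs : 0 ≤ s) : 0 ≤ φ s := h.2.2.2 s hs

lemma monotoneOn (h : ClassK φ) : MonotoneOn φ (Ici 0) := h.2.1.monotoneOn

lemma comp (hψ : ClassK ψ) (hφ : ClassK φ) : ClassK (ψ ∘ φ) :=
  ⟨hψ.1.comp hφ.1 hφ.2.2.2, hψ.2.1.comp hφ.2.1 hφ.2.2.2, by simp [hφ.2.2.1, hψ.2.2.1],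
    fun _ hs => hψ.nonneg (hφ.nonneg hs)⟩

lemma congr (hφ : ClassK φ) (h : EqOn φ ψ (Ici 0)) : ClassK ψ :=
  ⟨hφ.1.congr h.symm, hφ.2.1.congr h, h (mem_Ici.2 le_rfl) ▸ hφ.2.2.1,
    fun _ hs => h hs ▸ hφ.nonneg hs⟩

lemma apply_max_le_add (hφ : ClassK φ) {a b : ℝ} (ha : 0 ≤ a) (hb : 0 ≤ b) :
    φ (max a b) ≤ φ a + φ b := by
  rcases le_total a b with hab | hab
  · simpa [max_eq_right hab] using hφ.nonneg ha
  · simpa [max_eq_left hab] using hφ.nonneg hb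

end ClassK

namespace ClassKInf

variable {μ : ℝ → ℝ}

lemma surjOn (h : ClassKInf μ) : SurjOn μ (Ici 0) (Ici 0) := by
  have := intermediate_value_Ici h.1.1 h.2
  rwa [h.1.2.2.1] at this

lemma apply_invFunOn (h : ClassKInf μ) {y : ℝ} (hy : 0 ≤ y) : μ (invFunOn μ (Ici 0) y) = y :=
  invFunOn_eq (h.surjOn hy)

lemma invFunOn_apply (h : ClassKInf μ) {x : ℝ} (hx : 0 ≤ x) : invFunOn μ (Ici 0) (μ x) = x :=
  h.1.2.1.injOn.leftInvOn_invFunOn hx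

lemma classK_invFunOn (h : ClassKInf μ) : ClassK (invFunOn μ (Ici 0)) := by
  set ψ := invFunOn μ (Ici 0)
  have hmaps : MapsTo ψ (Ici 0) (Ici 0) := h.surjOn.mapsTo_invFunOn
  have hmono : StrictMonoOn ψ (Ici 0) := fun a ha b hb hab =>
    (h.1.2.1.lt_iff_lt (hmaps ha) (hmaps hb)).1
      (by rwa [h.apply_invFunOn ha, h.apply_invFunOn hb])
  have hzero : ψ 0 = 0 := by simpa [h.1.2.2.1] using h.invFunOn_apply le_rfl
  have himage : ψ '' Ici 0 = Ici 0 :=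
    (hmaps.image_subset).antisymm fun x hx => ⟨μ x, h.1.nonneg hx, h.invFunOn_apply hx⟩
  refine ⟨fun y hy => ?_, hmono, hzero, fun _ hy => hmaps hy⟩
  rcases (mem_Ici.1 hy).eq_or_lt with rfl | hpos
  · refine hmono.continuousWithinAt_right_of_image_mem_nhdsWithin self_mem_nhdsWithin ?_
    rw [himage, hzero]
    exact self_mem_nhdsWithin
  · refine (hmono.continuousAt_of_image_mem_nhds (Ici_mem_nhds hpos) ?_).continuousWithinAt
    rw [himage]
    exact Ici_mem_nhds (hzero ▸ hmono (mem_Ici.2 le_rfl) hy hpos)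

lemma le_invFunOn (h : ClassKInf μ) {x y : ℝ} (hx : 0 ≤ x) (hxy : μ x ≤ y) :
    x ≤ invFunOn μ (Ici 0) y := by
  have hμx := h.1.nonneg hx
  simpa [h.invFunOn_apply hx] using
    h.classK_invFunOn.monotoneOn hμx (hμx.trans hxy) hxy

end ClassKInf

/-- Solution of `ẏ = -c y ^ θ`, `y 0 = v`, continued by `0` once it reaches `0`. -/
noncomputable def finiteTimeDecay (c θ v t : ℝ) : ℝ :=
  max (v ^ (1 - θ) - c * (1 - θ) * t) 0 ^ (1 - θ)⁻¹

section finiteTimeDecay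

variable {c θ v t : ℝ}

lemma finiteTimeDecay_nonneg : 0 ≤ finiteTimeDecay c θ v t :=
  Real.rpow_nonneg (le_max_right _ _) _

lemma finiteTimeDecay_zero (hθ : θ < 1) (hv : 0 ≤ v) : finiteTimeDecay c θ v 0 = v := by
  rw [finiteTimeDecay, mul_zero, sub_zero, max_eq_left (Real.rpow_nonneg hv _),
    Real.rpow_rpow_inv hv (sub_pos.2 hθ).ne']

lemma finiteTimeDecay_mono (hθ : θ < 1) {w : ℝ} (hv : 0 ≤ v) (hvw : v ≤ w) :
    finiteTimeDecay c θ v t ≤ finiteTimeDecay c θ w t := by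
  have hP := sub_pos.2 hθ
  unfold finiteTimeDecay
  gcongr

lemma finiteTimeDecay_eq_zero (hc : 0 < c) (hθ : θ < 1)
    (ht : v ^ (1 - θ) / (c * (1 - θ)) ≤ t) : finiteTimeDecay c θ v t = 0 := by
  have hcP : 0 < c * (1 - θ) := mul_pos hc (sub_pos.2 hθ)
  rw [finiteTimeDecay, max_eq_right, Real.zero_rpow (inv_ne_zero (sub_pos.2 hθ).ne')]
  rw [div_le_iff₀ hcP] at ht
  linarith

lemma le_finiteTimeDecay (hθ : θ < 1) {y : ℝ} (hy : 0 ≤ y)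
    (h : y ^ (1 - θ) ≤ v ^ (1 - θ) - c * (1 - θ) * t) : y ≤ finiteTimeDecay c θ v t := by
  have hP := sub_pos.2 hθ
  calc y = (y ^ (1 - θ)) ^ (1 - θ)⁻¹ := (Real.rpow_rpow_inv hy hP.ne').symm
    _ ≤ finiteTimeDecay c θ v t :=
      Real.rpow_le_rpow (Real.rpow_nonneg hy _) (h.trans (le_max_left _ _))
        (inv_nonneg.2 hP.le)

end finiteTimeDecay

lemma classGKL_comp_finiteTimeDecay {c θ : ℝ} (hc : 0 < c) (hθ : θ < 1) {α μ : ℝ → ℝ}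
    (hα : ClassK α) (hμ : ClassK μ) : ClassGKL fun s t => α (finiteTimeDecay c θ (μ s) t) := by
  refine ⟨fun _ _ _ _ => hα.nonneg finiteTimeDecay_nonneg,
    (hα.comp hμ).congr fun s hs => ?_, fun s hs => ?_⟩
  · simp [finiteTimeDecay_zero hθ (hμ.nonneg hs)]
  · have hP := sub_pos.2 hθ
    refine ⟨μ s ^ (1 - θ) / (c * (1 - θ)),
      div_nonneg (Real.rpow_nonneg (hμ.nonneg hs.le) _) (by positivity), fun t ht => ?_⟩
    simp only [finiteTimeDecay_eq_zero hc hθ ht, hα.2.2.1]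

theorem rpow_one_sub_le_of_deriv_le_neg_mul_rpow {g g' : ℝ → ℝ} {c θ a b : ℝ}
    (hθ : θ < 1) (hab : a ≤ b) (hg : ∀ t ∈ Icc a b, HasDerivAt g (g' t) t)
    (hpos : ∀ t ∈ Icc a b, 0 < g t)
    (hg' : IntegrableOn g' (Icc a b))
    (hdec : ∀ᵐ s ∂volume.restrict (Icc a b), g' s ≤ -c * g s ^ θ) :
    g b ^ (1 - θ) ≤ g a ^ (1 - θ) - c * (1 - θ) * (b - a) := by
  set P := 1 - θ
  have hP : 0 < P := sub_pos.2 hθ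
  have hgc : ContinuousOn g (Icc a b) := fun t ht => (hg t ht).continuousAt.continuousWithinAt
  have hderiv :
      ∀ t ∈ uIcc a b, HasDerivAt (fun s => g s ^ P) (g' t * (P * g t ^ (P - 1))) t := by
    intro t ht
    rw [uIcc_of_le hab] at ht
    simpa [mul_assoc] using (hg t ht).rpow_const (p := P) (Or.inl (hpos t ht).ne')
  have hint : IntervalIntegrable (fun t => g' t * (P * g t ^ (P - 1))) volume a b :=
    (intervalIntegrable_iff_integrableOn_Icc_of_le hab).2 <| hg'.mul_continuousOn
      (continuousOn_const.mul (hgc.rpow_const fun t ht => Or.inl (hpos t ht).ne')) isCompact_Icc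
  -- `(g ^ P)' = P g' g ^ (P - 1) ≤ -c P g ^ (θ + P - 1) = -c P`
  have hle : ∫ t in a..b, g' t * (P * g t ^ (P - 1)) ≤ ∫ _ in a..b, -(c * P) := by
    refine intervalIntegral.integral_mono_ae_restrict hab hint intervalIntegrable_const ?_
    filter_upwards [hdec, ae_restrict_mem measurableSet_Icc] with s hs hmem
    have hgs := hpos s hmem
    have hcancel : g s ^ θ * g s ^ (P - 1) = 1 := by
      rw [← Real.rpow_add hgs, show θ + (P - 1) = 0 by ring, Real.rpow_zero]
    calc g' s * (P * g s ^ (P - 1)) ≤ -c * g s ^ θ * (P * g s ^ (P - 1)) :=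
          mul_le_mul_of_nonneg_right hs (by positivity)
      _ = -(c * P) := by linear_combination (-(c * P)) * hcancel
  rw [intervalIntegral.integral_eq_sub_of_hasDerivAt hderiv hint,
    intervalIntegral.integral_const, smul_eq_mul] at hle
  linarith

theorem le_max_finiteTimeDecay {g g' : ℝ → ℝ} {c θ L T : ℝ} (hc : 0 ≤ c) (hθ : θ < 1)
    (hL : 0 ≤ L) (hT : 0 ≤ T) (hg : ∀ t ∈ Icc 0 T, HasDerivAt g (g' t) t)
    (hg' : IntegrableOn g' (Icc 0 T))
    (hdec : ∀ᵐ s ∂volume.restrict (Icc 0 T), L < g s → g' s ≤ -c * g s ^ θ) :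
    g T ≤ max (finiteTimeDecay c θ (g 0) T) L := by
  have decay : ∀ a ∈ Icc 0 T, (∀ t ∈ Icc a T, L < g t) →
      g T ^ (1 - θ) ≤ g a ^ (1 - θ) - c * (1 - θ) * (T - a) := by
    intro a ha habove
    have hsub : Icc a T ⊆ Icc 0 T := Icc_subset_Icc_left ha.1
    refine rpow_one_sub_le_of_deriv_le_neg_mul_rpow hθ ha.2 (fun t ht => hg t (hsub ht))
      (fun t ht => hL.trans_lt (habove t ht)) (hg'.mono_set hsub) ?_
    filter_upwards [ae_restrict_of_ae_restrict_of_subset hsub hdec,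
      ae_restrict_mem measurableSet_Icc] with s hs hmem using hs (habove s hmem)
  by_cases habove : ∀ t ∈ Icc 0 T, L < g t
  · refine le_max_of_le_left (le_finiteTimeDecay hθ (hL.trans (habove T ⟨hT, le_rfl⟩).le) ?_)
    simpa using decay 0 ⟨le_rfl, hT⟩ habove
  refine le_max_of_le_right (le_of_not_gt fun hLT => ?_)
  push Not at habove
  -- the last time `t₁ ≤ T` at which `g ≤ L`; on `(t₁, T]` the decay forces `g T ≤ g t₁`
  have hgc : ContinuousOn g (Icc 0 T) := fun t ht => (hg t ht).continuousAt.continuousWithinAt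
  obtain ⟨t₁, ⟨ht₁, hgt₁⟩, hmax⟩ := (isCompact_Icc.of_isClosed_subset
    (hgc.preimage_isClosed_of_isClosed isClosed_Icc isClosed_Iic)
    inter_subset_left).exists_isGreatest habove
  have hlast : ∀ t ∈ Ioc t₁ T, L < g t := fun t ht =>
    lt_of_not_ge fun hle => ht.1.not_ge (hmax ⟨⟨ht₁.1.trans ht.1.le, ht.2⟩, hle⟩)
  have ht₁T : t₁ < T := ht₁.2.lt_of_ne fun h => (h ▸ hLT).not_ge hgt₁
  have hgT_le : ∀ t ∈ Ioo t₁ T, g T ≤ g t := by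
    intro t ht
    have hgT := decay t ⟨ht₁.1.trans ht.1.le, ht.2.le⟩
      fun s hs => hlast s ⟨ht.1.trans_le hs.1, hs.2⟩
    have hgt := hlast t ⟨ht.1, ht.2.le⟩
    have : 0 ≤ c * (1 - θ) * (T - t) :=
      mul_nonneg (mul_nonneg hc (sub_pos.2 hθ).le) (sub_pos.2 ht.2).le
    exact (Real.rpow_le_rpow_iff (hL.trans hLT.le) (hL.trans hgt.le) (sub_pos.2 hθ)).1
      (by linarith)
  have hlim : g T ≤ g t₁ :=
    ge_of_tendsto ((hg t₁ ht₁).continuousAt.tendsto.mono_left nhdsWithin_le_nhds)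
      (eventually_of_mem (Ioo_mem_nhdsGT ht₁T) hgT_le)
  exact hLT.not_ge (hlim.trans hgt₁)

theorem integrableOn_comp_of_ae_norm_le {E F : Type*} [TopologicalSpace E]
    [TopologicalSpace.PseudoMetrizableSpace E] [NormedAddCommGroup F] [ProperSpace F]
    {Φ : E × F → ℝ} (hΦ : Continuous Φ) {z : ℝ → E} {d : ℝ → F} {K : Set ℝ}
    (hK : IsCompact K) (hz : ContinuousOn z K)
    (hd : AEStronglyMeasurable d (volume.restrict K)) {D : ℝ}
    (hdD : ∀ᵐ s ∂volume.restrict K, ‖d s‖ ≤ D) :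
    IntegrableOn (fun s => Φ (z s, d s)) K := by
  obtain ⟨C, hC⟩ := ((hK.image_of_continuousOn hz).prod (isCompact_closedBall (0 : F) D))
    |>.exists_bound_of_continuousOn hΦ.continuousOn
  have := isFiniteMeasure_restrict.2 (hK.measure_lt_top (μ := volume)).ne
  refine Integrable.of_bound
    (hΦ.comp_aestronglyMeasurable ((hz.aestronglyMeasurable hK.measurableSet).prodMk hd)) C ?_
  filter_upwards [hdD, ae_restrict_mem hK.measurableSet] with s hs hmem
  exact hC _ ⟨mem_image_of_mem z hmem, mem_closedBall_zero_iff.2 hs⟩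

theorem lyapunov_le_max_finiteTimeDecay {E F : Type*} [NormedAddCommGroup E]
    [NormedSpace ℝ E] [NormedAddCommGroup F] [ProperSpace F] {f : E → F → E}
    (hf : Continuous fun p : E × F => f p.1 p.2) {V : E → ℝ} (hV : ContDiff ℝ 1 V)
    {μ₂ χ : ℝ → ℝ} (hμ₂ : ClassK μ₂) (hχ : ClassK χ) {c θ : ℝ} (hc : 0 ≤ c) (hθ : θ < 1)
    (hVle : ∀ x, V x ≤ μ₂ ‖x‖)
    (hdecay : ∀ x w, χ ‖w‖ ≤ ‖x‖ → fderiv ℝ V x (f x w) ≤ -c * V x ^ θ)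
    {z : ℝ → E} {d : ℝ → F} {D T : ℝ} (hz : ∀ t ≥ 0, HasDerivAt z (f (z t) (d t)) t)
    (hd : AEStronglyMeasurable d (volume.restrict (Icc 0 T))) (hD : 0 ≤ D) (hT : 0 ≤ T)
    (hdD : ∀ᵐ s ∂volume.restrict (Icc 0 T), ‖d s‖ ≤ D) :
    V (z T) ≤ max (finiteTimeDecay c θ (V (z 0)) T) (μ₂ (χ D)) := by
  have hVz : ∀ t ∈ Icc (0 : ℝ) T,
      HasDerivAt (V ∘ z) (fderiv ℝ V (z t) (f (z t) (d t))) t := fun t ht =>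
    (hV.differentiable one_ne_zero (z t)).hasFDerivAt.comp_hasDerivAt t (hz t ht.1)
  have hint : IntegrableOn (fun t => fderiv ℝ V (z t) (f (z t) (d t))) (Icc 0 T) :=
    integrableOn_comp_of_ae_norm_le (Φ := fun p => fderiv ℝ V p.1 (f p.1 p.2))
      (((hV.continuous_fderiv one_ne_zero).comp continuous_fst).clm_apply hf) isCompact_Icc
      (fun t ht => (hz t ht.1).continuousAt.continuousWithinAt) hd hdD
  refine le_max_finiteTimeDecay hc hθ (hμ₂.nonneg (hχ.nonneg hD)) hT hVz hint ?_
  filter_upwards [hdD] with s hs hVs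
  refine hdecay _ _ (le_of_not_gt fun hlt => hVs.not_ge ?_)
  calc V (z s) ≤ μ₂ ‖z s‖ := hVle _
    _ ≤ μ₂ (χ D) := hμ₂.monotoneOn (norm_nonneg _) (hχ.nonneg hD)
      (hlt.le.trans (hχ.monotoneOn (norm_nonneg _) hD hs))

lemma Real.essSup_nonneg {α : Type*} [MeasurableSpace α] {f : α → ℝ} (hf : 0 ≤ f)
    (μ : Measure α) : 0 ≤ essSup f μ := by
  rcases eq_or_ne μ 0 with rfl | hμ
  · simp [essSup, limsup_eq]
  · have := ae_neBot.2 hμ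
    refine Real.sInf_nonneg fun a (ha : ∀ᶠ y in map f (ae μ), y ≤ a) => ?_
    obtain ⟨x, hx⟩ := (eventually_map.1 ha).exists
    exact (hf x).trans hx

theorem ftiss_of_ftiss_lyapunov_function_general
    (n m : ℕ)
    (f : EuclideanSpace ℝ (Fin n) → EuclideanSpace ℝ (Fin m) → EuclideanSpace ℝ (Fin n))
    (hf_cont : Continuous fun p : EuclideanSpace ℝ (Fin n) × EuclideanSpace ℝ (Fin m) =>
      f p.1 p.2)
    (d : ℝ → EuclideanSpace ℝ (Fin m))
    (hd_meas : AEStronglyMeasurable d volume)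
    (hd_loc : ∀ T > (0:ℝ), ∃ M : ℝ, ∀ᵐ s ∂(volume.restrict (Ioo 0 T)), ‖d s‖ ≤ M)
    (V : EuclideanSpace ℝ (Fin n) → ℝ)
    (hV_smooth : ContDiff ℝ 1 V) (hV_nonneg : ∀ x, 0 ≤ V x)
    (μ₁ μ₂ χ : ℝ → ℝ) (hμ₁ : ClassKInf μ₁) (hμ₂ : ClassKInf μ₂) (hχ : ClassK χ)
    (c θ : ℝ) (hc : 0 < c) (hθ : θ ∈ Ioo (0:ℝ) 1)
    (hsandwich : ∀ x, μ₁ ‖x‖ ≤ V x ∧ V x ≤ μ₂ ‖x‖)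
    (hdecay : ∀ (z : EuclideanSpace ℝ (Fin n)) (w : EuclideanSpace ℝ (Fin m)),
      χ ‖w‖ ≤ ‖z‖ → fderiv ℝ V z (f z w) ≤ -c * V z ^ θ) :
    ∃ ϑ β : _, ClassK ϑ ∧ ClassGKL β ∧
      ∀ z : ℝ → EuclideanSpace ℝ (Fin n),
        (∀ t ≥ (0:ℝ), HasDerivAt z (f (z t) (d t)) t) →
        ∀ t ≥ (0:ℝ),
          ‖z t‖ ≤ β ‖z 0‖ t + ϑ (essSup (fun s => ‖d s‖) (volume.restrict (Ioo 0 t))) := by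
  have hμ₁inv := hμ₁.classK_invFunOn
  refine ⟨invFunOn μ₁ (Ici 0) ∘ μ₂ ∘ χ,
    fun s t => invFunOn μ₁ (Ici 0) (finiteTimeDecay c θ (μ₂ s) t),
    hμ₁inv.comp (hμ₂.1.comp hχ), classGKL_comp_finiteTimeDecay hc hθ.2 hμ₁inv hμ₂.1,
    fun z hz T hT => ?_⟩
  set D := essSup (fun s => ‖d s‖) (volume.restrict (Ioo 0 T))
  have hD : 0 ≤ D := Real.essSup_nonneg (fun _ => norm_nonneg _) _
  have hdD : ∀ᵐ s ∂volume.restrict (Icc 0 T), ‖d s‖ ≤ D := by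
    obtain ⟨M, hM⟩ := hd_loc (T + 1) (by linarith)
    rw [← restrict_Ioo_eq_restrict_Icc]
    exact ae_le_essSup (isBoundedUnder_of_eventually_le
      (ae_restrict_of_ae_restrict_of_subset (Ioo_subset_Ioo_right (by linarith)) hM))
  have hVT := lyapunov_le_max_finiteTimeDecay hf_cont hV_smooth hμ₂.1 hχ hc.le hθ.2
    (fun x => (hsandwich x).2) hdecay hz hd_meas.restrict hD hT hdD
  have hV0 :=
    finiteTimeDecay_mono (c := c) (t := T) hθ.2 (hV_nonneg (z 0)) (hsandwich (z 0)).2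
  calc ‖z T‖
      ≤ invFunOn μ₁ (Ici 0) (max (finiteTimeDecay c θ (μ₂ ‖z 0‖) T) (μ₂ (χ D))) :=
        hμ₁.le_invFunOn (norm_nonneg _)
          ((hsandwich (z T)).1.trans (hVT.trans (max_le_max_right _ hV0)))
    _ ≤ _ := hμ₁inv.apply_max_le_add finiteTimeDecay_nonneg (hμ₂.1.nonneg (hχ.nonneg hD))

/-- if the system `ż = f(z,d)` on `ℝⁿ` (with `f` continuous,
`f(0,0) = 0`, and `d ∈ L^∞_loc(ℝ≥0;ℝᵐ)`) admits an FTISS Lyapunov function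
`V`, i.e. `μ₁(|x|) ≤ V(x) ≤ μ₂(|x|)` with `μ₁, μ₂ ∈ K∞` and
`DV(z)·f(z,d) ≤ −c V(z)^θ` whenever `|z| ≥ χ(|d|)` (`χ ∈ K`, `c > 0`,
`θ ∈ (0,1)`), then the system is FTISS: there are `ϑ ∈ K` and `β ∈ GKL` such
that every solution satisfies
`|z(t)| ≤ β(|z₀|,t) + ϑ(ess sup_{s∈(0,t)} |d(s)|)` for all `t ≥ 0`. -/
theorem ftiss_of_ftiss_lyapunov_function
    (n m : ℕ)
    (f : EuclideanSpace ℝ (Fin n) → EuclideanSpace ℝ (Fin m) → EuclideanSpace ℝ (Fin n))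
    (hf_cont : Continuous fun p : EuclideanSpace ℝ (Fin n) × EuclideanSpace ℝ (Fin m) =>
      f p.1 p.2)
    (hf0 : f 0 0 = 0)
    (d : ℝ → EuclideanSpace ℝ (Fin m))
    (hd_meas : AEStronglyMeasurable d volume)
    (hd_loc : ∀ T > (0:ℝ), ∃ M : ℝ, ∀ᵐ s ∂(volume.restrict (Ioo 0 T)), ‖d s‖ ≤ M)
    (V : EuclideanSpace ℝ (Fin n) → ℝ)
    (hV_smooth : ContDiff ℝ 1 V) (hV_nonneg : ∀ x, 0 ≤ V x)
    (μ₁ μ₂ χ : ℝ → ℝ) (hμ₁ : ClassKInf μ₁) (hμ₂ : ClassKInf μ₂) (hχ : ClassK χ)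
    (c θ : ℝ) (hc : 0 < c) (hθ : θ ∈ Ioo (0:ℝ) 1)
    (hsandwich : ∀ x, μ₁ ‖x‖ ≤ V x ∧ V x ≤ μ₂ ‖x‖)
    (hdecay : ∀ (z : EuclideanSpace ℝ (Fin n)) (w : EuclideanSpace ℝ (Fin m)),
      χ ‖w‖ ≤ ‖z‖ → fderiv ℝ V z (f z w) ≤ -c * V z ^ θ) :
    ∃ ϑ β : _, ClassK ϑ ∧ ClassGKL β ∧
      ∀ z : ℝ → EuclideanSpace ℝ (Fin n),
        (∀ t ≥ (0:ℝ), HasDerivAt z (f (z t) (d t)) t) →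
        ∀ t ≥ (0:ℝ),
          ‖z t‖ ≤ β ‖z 0‖ t + ϑ (essSup (fun s => ‖d s‖) (volume.restrict (Ioo 0 t))) :=
  ftiss_of_ftiss_lyapunov_function_general n m f hf_cont d hd_meas hd_loc V hV_smooth hV_nonneg μ₁
    μ₂ χ hμ₁ hμ₂ hχ c θ hc hθ hsandwich hdecay
end

section
/- Let P, η, k > 0 and γ ∈ (0,1) be constants. The scalar tracking error dynamics ė(t) = −(P/η) k |e(t)|^γ sgn(e(t)) + Γ(t), with input Γ ∈ L^∞_loc(ℝ≥0; ℝ), are finite-time input-to-state stable with respect to Γ: there exist a function ϑ of class K and a function β of class GKL such that every solution e : ℝ≥0 → ℝ satisfies |e(t)| ≤ β(|e(0)|, t) + ϑ(ess sup_{s∈(0,t)} |Γ(s)|) for all t ≥ 0. -/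
open MeasureTheory Set Filter

/-!
Write `c = P k / η`. Let `y` solve `ẏ = -(c/2) y^γ`, `y(0) = |e(0)|`; it reaches `0` at time
`2 |e(0)|^(1-γ) / (c (1-γ))` and stays there. Let `r` be the radius with `c r^γ = 2 ‖Γ‖_∞`, so
that for `|e| ≥ r` the input term `2 e Γ` of `(e²)'` is at most half of the drift
`-2c |e|^(1+γ)`; the other half pays for the decrease of `(y + r)²`. Hence wherever
`|e| > y + r` the derivative of `e² - (y + r)²` is `≤ 0`, and since this difference is `≤ 0` at
`t = 0` it stays `≤ 0`. As `Γ` is only essentially bounded, this last step goes through the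
fundamental theorem of calculus rather than a pointwise comparison principle.
-/

theorem le_of_hasDerivAt_of_ae_deriv_nonpos {D D' : ℝ → ℝ} {a b : ℝ} (hab : a ≤ b)
    (hD : ∀ x ∈ Icc a b, HasDerivAt D (D' x) x) (hD' : IntegrableOn D' (Icc a b))
    (hneg : ∀ᵐ x ∂volume.restrict (Ioo a b), D' x ≤ 0) : D b ≤ D a := by
  have hFTC : ∫ x in a..b, D' x = D b - D a :=
    intervalIntegral.integral_eq_sub_of_hasDerivAt (fun x hx => hD x (uIcc_of_le hab ▸ hx))
      ((intervalIntegrable_iff_integrableOn_Icc_of_le hab).2 hD')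
  have : ∫ x in a..b, D' x ≤ 0 := by
    rw [intervalIntegral.integral_of_le hab, ← restrict_Ioo_eq_restrict_Ioc]
    exact setIntegral_nonpos_of_ae_restrict hneg
  linarith

theorem nonpos_of_hasDerivAt_of_ae_deriv_nonpos_where_pos {D D' : ℝ → ℝ} {a b : ℝ} (hab : a ≤ b)
    (hD : ∀ x ∈ Icc a b, HasDerivAt D (D' x) x) (hD' : IntegrableOn D' (Icc a b))
    (hdec : ∀ᵐ x ∂volume.restrict (Ioo a b), 0 < D x → D' x ≤ 0) (ha : D a ≤ 0) :
    D b ≤ 0 := by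
  have hcont : ContinuousOn D (Icc a b) := fun x hx => (hD x hx).continuousAt.continuousWithinAt
  have hclosed : IsClosed ({x | D x ≤ 0} ∩ Icc a b) :=
    inter_comm _ _ ▸ hcont.preimage_isClosed_of_isClosed isClosed_Icc isClosed_Iic
  refine hclosed.mem_of_ge_of_forall_exists_gt ha hab fun x ⟨hx, hxa, hxb⟩ => ?_
  by_contra hempty
  have hpos : ∀ w ∈ Ioc x b, 0 < D w := fun w hw =>
    not_le.1 fun hw' => hempty ⟨w, hw', hw⟩
  have hsub : Icc x b ⊆ Icc a b := Icc_subset_Icc_left hxa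
  have hxb' : D b ≤ D x := le_of_hasDerivAt_of_ae_deriv_nonpos hxb.le
    (fun w hw => hD w (hsub hw)) (hD'.mono_set hsub) <| by
      filter_upwards [ae_restrict_of_ae_restrict_of_subset (Ioo_subset_Ioo_left hxa) hdec,
        ae_restrict_mem measurableSet_Ioo] with w hw hwI
      exact hw (hpos w (Ioo_subset_Ioc_self hwI))
  exact (hpos b ⟨hxb, le_rfl⟩).not_ge (hxb'.trans hx)

theorem hasDerivAt_max_zero_rpow {q : ℝ} (hq : 1 < q) (x : ℝ) :
    HasDerivAt (fun x => max x 0 ^ q) (q * max x 0 ^ (q - 1)) x := by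
  have hcont : Continuous fun x : ℝ => max x 0 := continuous_id.max continuous_const
  refine hasDerivAt_of_hasDerivAt_of_ne' (x := 0) (fun y hy => ?_)
    ((hcont.rpow_const fun _ => Or.inr (by linarith)).continuousAt)
    (((hcont.rpow_const fun _ => Or.inr (by linarith)).const_mul q).continuousAt) x
  rcases hy.lt_or_gt with hy | hy
  · have hzero : (fun x => max x 0 ^ q) =ᶠ[nhds y] fun _ => 0 := by
      filter_upwards [Iio_mem_nhds hy] with z hz
      rw [max_eq_right (le_of_lt hz), Real.zero_rpow (by linarith)]
    rw [max_eq_right hy.le, Real.zero_rpow (by linarith), mul_zero]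
    exact (hasDerivAt_const y 0).congr_of_eventuallyEq hzero
  · have hid : (fun x => max x 0 ^ q) =ᶠ[nhds y] fun x => x ^ q := by
      filter_upwards [Ioi_mem_nhds hy] with z hz
      rw [max_eq_left hz.le]
    rw [max_eq_left hy.le]
    exact (Real.hasDerivAt_rpow_const (Or.inl hy.ne')).congr_of_eventuallyEq hid

noncomputable def settlingProfile (c γ s t : ℝ) : ℝ :=
  max (s ^ (1 - γ) - c * (1 - γ) / 2 * t) 0 ^ (1 / (1 - γ))

namespace settlingProfile

variable {c γ : ℝ}

theorem nonneg (s t : ℝ) : 0 ≤ settlingProfile c γ s t :=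
  Real.rpow_nonneg (le_max_right _ _) _

theorem apply_zero (hγ : γ < 1) {s : ℝ} (hs : 0 ≤ s) : settlingProfile c γ s 0 = s := by
  have h1γ : 1 - γ ≠ 0 := by linarith
  rw [settlingProfile, mul_zero, sub_zero, max_eq_left (Real.rpow_nonneg hs _),
    ← Real.rpow_mul hs, mul_one_div_cancel h1γ, Real.rpow_one]

theorem eq_zero_of_le (hc : 0 < c) (hγ : γ < 1) {s t : ℝ}
    (ht : 2 * s ^ (1 - γ) / (c * (1 - γ)) ≤ t) : settlingProfile c γ s t = 0 := by
  have h1γ : 0 < 1 - γ := by linarith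
  have hlin : s ^ (1 - γ) - c * (1 - γ) / 2 * t ≤ 0 := by
    rw [div_le_iff₀ (by positivity)] at ht
    linarith
  rw [settlingProfile, max_eq_right hlin, Real.zero_rpow (by positivity)]

theorem hasDerivAt (hγ : γ ∈ Ioo 0 1) (s t : ℝ) :
    HasDerivAt (settlingProfile c γ s) (-(c / 2) * settlingProfile c γ s t ^ γ) t := by
  obtain ⟨hγ0, hγ1⟩ := hγ
  have h1γ : 0 < 1 - γ := by linarith
  have hq : 1 < 1 / (1 - γ) := by rw [lt_div_iff₀ h1γ]; linarith
  have hlin : HasDerivAt (fun t => s ^ (1 - γ) - c * (1 - γ) / 2 * t) (-(c * (1 - γ) / 2)) t := by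
    simpa using ((hasDerivAt_id t).const_mul (c * (1 - γ) / 2)).const_sub (s ^ (1 - γ))
  refine ((hasDerivAt_max_zero_rpow hq _).comp t hlin).congr_deriv ?_
  rw [settlingProfile, ← Real.rpow_mul (le_max_right _ _)]
  have hexp : 1 / (1 - γ) - 1 = 1 / (1 - γ) * γ := by field_simp; ring
  rw [hexp]
  field_simp

theorem classGKL (hc : 0 < c) (hγ : γ < 1) : ClassGKL (settlingProfile c γ) := by
  have h1γ : 0 < 1 - γ := by linarith
  have hid : EqOn (fun s => settlingProfile c γ s 0) id (Ici 0) := fun s hs => apply_zero hγ hs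
  exact ⟨fun s _ t _ => nonneg s t,
    ⟨continuousOn_id.congr hid, strictMonoOn_id.congr hid.symm, hid self_mem_Ici,
      fun s hs => le_trans hs (hid hs).ge⟩,
    fun s _ => ⟨_, by positivity, fun t ht => eq_zero_of_le hc hγ ht⟩⟩

end settlingProfile

noncomputable def ftissGain (c γ x : ℝ) : ℝ :=
  (2 * max x 0 / c) ^ (1 / γ)

theorem mul_ftissGain_rpow {c γ : ℝ} (hc : 0 < c) (hγ : 0 < γ) (x : ℝ) :
    c * ftissGain c γ x ^ γ = 2 * max x 0 := by
  rw [ftissGain, ← Real.rpow_mul (by positivity), one_div_mul_cancel hγ.ne', Real.rpow_one]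
  field_simp

theorem classK_ftissGain {c γ : ℝ} (hc : 0 < c) (hγ : 0 < γ) : ClassK (ftissGain c γ) := by
  have hmax : Continuous fun x : ℝ => 2 * max x 0 / c :=
    ((continuous_id.max continuous_const).const_mul 2).div_const c
  refine ⟨(hmax.rpow_const fun _ => Or.inr (by positivity)).continuousOn, ?_, ?_,
    fun x _ => Real.rpow_nonneg (by positivity) _⟩
  · intro x (hx : 0 ≤ x) y (hy : 0 ≤ y) hxy
    simp only [ftissGain, max_eq_left hx, max_eq_left hy]
    exact Real.rpow_lt_rpow (by positivity) (by gcongr) (by positivity)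
  · simp [ftissGain, hγ.ne']

theorem Real.self_mul_sign (x : ℝ) : x * Real.sign x = |x| := by
  rcases lt_trichotomy x 0 with hx | rfl | hx
  · rw [Real.sign_of_neg hx, abs_of_neg hx, mul_neg_one]
  · simp
  · rw [Real.sign_of_pos hx, abs_of_pos hx, mul_one]

theorem lyapunov_deriv_nonpos {c γ x g y r : ℝ} (hc : 0 < c) (hγ : 0 ≤ γ) (hy : 0 ≤ y)
    (hr : 0 ≤ r) (hg : 2 * |g| ≤ c * r ^ γ) (hx : y + r ≤ |x|) :
    2 * x * (-c * |x| ^ γ * Real.sign x + g) - 2 * (y + r) * (-(c / 2) * y ^ γ) ≤ 0 := by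
  have hxg : 2 * x * g ≤ c * (|x| * |x| ^ γ) := calc
    2 * x * g ≤ |x| * (2 * |g|) := by
      have := le_abs_self (x * g)
      rw [abs_mul] at this
      linarith
    _ ≤ |x| * (c * |x| ^ γ) := by
      refine mul_le_mul_of_nonneg_left (hg.trans ?_) (abs_nonneg x)
      gcongr
      linarith
    _ = c * (|x| * |x| ^ γ) := by ring
  have hyr : (y + r) * y ^ γ ≤ |x| * |x| ^ γ :=
    mul_le_mul hx (by gcongr; linarith) (by positivity) (abs_nonneg x)
  have hsign : 2 * x * (-c * |x| ^ γ * Real.sign x) = -2 * c * (|x| * |x| ^ γ) := by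
    rw [← Real.self_mul_sign x]; ring
  linarith [mul_le_mul_of_nonneg_left hyr hc.le]

theorem abs_le_settlingProfile_add_ftissGain {c γ : ℝ} (hc : 0 < c) (hγ : γ ∈ Ioo 0 1)
    {e Γ : ℝ → ℝ} (he : ∀ t ≥ 0, HasDerivAt e (-c * |e t| ^ γ * Real.sign (e t) + Γ t) t)
    {T N : ℝ} (hT : 0 ≤ T) (hΓ : IntegrableOn Γ (Icc 0 T))
    (hN : ∀ᵐ t ∂volume.restrict (Ioo 0 T), |Γ t| ≤ N) :
    |e T| ≤ settlingProfile c γ |e 0| T + ftissGain c γ N := by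
  set y := settlingProfile c γ |e 0|
  set r := ftissGain c γ N
  have hr : 0 ≤ r := Real.rpow_nonneg (by positivity) _
  have hy : ∀ t, HasDerivAt y (-(c / 2) * y t ^ γ) t := settlingProfile.hasDerivAt hγ _
  have hycont : Continuous y := continuous_iff_continuousAt.2 fun t => (hy t).continuousAt
  have hecont : ContinuousOn e (Icc 0 T) := fun t ht => (he t ht.1).continuousAt.continuousWithinAt
  set D' : ℝ → ℝ := fun t =>
    2 * e t * (-c * |e t| ^ γ * Real.sign (e t) + Γ t) - 2 * (y t + r) * (-(c / 2) * y t ^ γ)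
  have hD : ∀ t ∈ Icc 0 T, HasDerivAt (fun t => e t ^ 2 - (y t + r) ^ 2) (D' t) t := fun t ht =>
    (((he t ht.1).pow 2).sub (((hy t).add_const r).pow 2)).congr_deriv (by simp only [D']; ring)
  have hD' : IntegrableOn D' (Icc 0 T) := by
    -- `sign` is discontinuous, so first absorb it into `|e t|`.
    have hD'eq : D' = fun t =>
        2 * e t * Γ t + (c * (y t + r) * y t ^ γ - 2 * c * (|e t| ^ γ * |e t|)) := by
      ext t
      simp only [D']
      rw [← Real.self_mul_sign (e t)]
      ring
    rw [hD'eq]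
    refine (hΓ.continuousOn_mul (continuousOn_const.mul hecont) isCompact_Icc).add
      (ContinuousOn.integrableOn_compact isCompact_Icc ?_)
    have hrpow : ∀ {f : ℝ → ℝ}, ContinuousOn f (Icc 0 T) →
        ContinuousOn (fun t => f t ^ γ) (Icc 0 T) := fun hf =>
      hf.rpow_const fun _ _ => Or.inr hγ.1.le
    exact ((continuousOn_const.mul (hycont.continuousOn.add continuousOn_const)).mul
      (hrpow hycont.continuousOn)).sub
      (continuousOn_const.mul ((hrpow hecont.abs).mul hecont.abs))
  have hdec : ∀ᵐ t ∂volume.restrict (Ioo 0 T), 0 < e t ^ 2 - (y t + r) ^ 2 → D' t ≤ 0 := by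
    filter_upwards [hN] with t hΓt hDt
    have hyr : y t + r ≤ |e t| := by
      have := sq_lt_sq.1 (sub_pos.1 hDt)
      rw [abs_of_nonneg (add_nonneg (settlingProfile.nonneg _ _) hr)] at this
      exact this.le
    refine lyapunov_deriv_nonpos hc hγ.1.le (settlingProfile.nonneg _ _) hr ?_ hyr
    rw [mul_ftissGain_rpow hc hγ.1]
    linarith [le_max_left N 0]
  have hD0 : e 0 ^ 2 - (y 0 + r) ^ 2 ≤ 0 := by
    have hy0 : y 0 = |e 0| := settlingProfile.apply_zero hγ.2 (abs_nonneg _)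
    rw [hy0, ← sq_abs (e 0)]
    nlinarith [abs_nonneg (e 0)]
  have hDT := nonpos_of_hasDerivAt_of_ae_deriv_nonpos_where_pos hT hD hD' hdec hD0
  exact abs_le_of_sq_le_sq (by linarith) (add_nonneg (settlingProfile.nonneg _ _) hr)

/-- the scalar tracking error dynamics
`ė(t) = −(P/η) k |e(t)|^γ sgn(e(t)) + Γ(t)`, with `P, η, k > 0`, `γ ∈ (0,1)`
and input `Γ ∈ L^∞_loc(ℝ≥0;ℝ)`, are finite-time input-to-state stable with
respect to `Γ`: there exist `ϑ` of class `K` and `β` of class `GKL` such that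
every solution satisfies
`|e(t)| ≤ β(|e(0)|,t) + ϑ(ess sup_{s∈(0,t)} |Γ(s)|)` for all `t ≥ 0`. -/
theorem tracking_error_ftiss
    (P η k γ : ℝ) (hP : 0 < P) (hη : 0 < η) (hk : 0 < k) (hγ : γ ∈ Ioo (0:ℝ) 1)
    (Γ : ℝ → ℝ)
    (hΓ_meas : AEStronglyMeasurable Γ volume)
    (hΓ_loc : ∀ T > (0:ℝ), ∃ M : ℝ, ∀ᵐ s ∂(volume.restrict (Ioo 0 T)), |Γ s| ≤ M) :
    ∃ ϑ β : _, ClassK ϑ ∧ ClassGKL β ∧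
      ∀ e : ℝ → ℝ,
        (∀ t ≥ (0:ℝ),
          HasDerivAt e (-(P / η) * k * |e t| ^ γ * Real.sign (e t) + Γ t) t) →
        ∀ t ≥ (0:ℝ),
          |e t| ≤ β |e 0| t + ϑ (essSup (fun s => |Γ s|) (volume.restrict (Ioo 0 t))) := by
  have hc : 0 < P / η * k := by positivity
  refine ⟨ftissGain (P / η * k) γ, settlingProfile (P / η * k) γ, classK_ftissGain hc hγ.1,
    settlingProfile.classGKL hc hγ.2, fun e he t ht => ?_⟩
  -- A bound on `(0, t + 1)` rather than `(0, t)`, which `hΓ_loc` does not provide for `t = 0`.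
  obtain ⟨M, hM⟩ := hΓ_loc (t + 1) (by linarith)
  have hΓ : IntegrableOn Γ (Icc 0 t) :=
    (integrableOn_Icc_iff_integrableOn_Ioc (by finiteness)).2 <|
      (Measure.integrableOn_of_bounded measure_Ioo_lt_top.ne hΓ_meas hM).mono_set
        (Ioc_subset_Ioo_right (by linarith))
  have hΓ_bdd : ∀ᵐ s ∂volume.restrict (Ioo 0 t), |Γ s| ≤ M :=
    ae_restrict_of_ae_restrict_of_subset (Ioo_subset_Ioo_right (by linarith)) hM
  refine abs_le_settlingProfile_add_ftissGain hc hγ (fun s hs => ?_) ht hΓ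
    (ae_le_essSup (isBoundedUnder_of_eventually_le hΓ_bdd))
  simpa only [neg_mul] using he s hs
end

section
/- Let P, η, k > 0, γ ∈ (0,1), and C₀ ∈ (0,k) be constants. For all real numbers e and Γ, if |Γ| ≤ (P/η) C₀ |e|^γ (equivalently, |e| ≥ ((η/(P C₀)) |Γ|)^{1/γ}), then e · (−(P/η) k |e|^γ sgn(e) + Γ) ≤ −(P/η)(k − C₀) · 2^{(1+γ)/2} · (e²/2)^{(1+γ)/2}. -/
/-- For `P, η, k > 0`, `γ ∈ (0,1)`, `C₀ ∈ (0,k)`, whenever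
`|Γ| ≤ (P/η) C₀ |e|^γ`, one has
`e ⬝ (−(P/η) k |e|^γ sgn(e) + Γ) ≤ −(P/η)(k − C₀) 2^{(1+γ)/2} (e²/2)^{(1+γ)/2}`.
Here `sgn` is `Real.sign` (with `sgn 0 = 0`). -/
theorem ftiss_lyapunov_decay_inequality
    (P η k γ C₀ : ℝ) (hP : 0 < P) (hη : 0 < η) (hk : 0 < k)
    (hγ : γ ∈ Set.Ioo (0:ℝ) 1) (hC₀ : C₀ ∈ Set.Ioo (0:ℝ) k)
    (e Γ : ℝ) (hΓ : |Γ| ≤ P / η * C₀ * |e| ^ γ) :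
    e * (-(P / η) * k * |e| ^ γ * Real.sign e + Γ)
      ≤ -(P / η) * (k - C₀) * (2:ℝ) ^ ((1 + γ) / 2) * (e ^ 2 / 2) ^ ((1 + γ) / 2) := by
  have hPe : 0 < P / η := div_pos hP hη
  have habs : 0 ≤ |e| := abs_nonneg e
  have hsign : e * Real.sign e = |e| := by
    rcases lt_trichotomy e 0 with h | h | h
    · rw [Real.sign_of_neg h, abs_of_neg h]; ring
    · simp [h]
    · rw [Real.sign_of_pos h, abs_of_pos h]; ring
  -- RHS simplification: 2^((1+γ)/2) * (e²/2)^((1+γ)/2) = |e|^(1+γ)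
  have hrhs : (2:ℝ) ^ ((1 + γ) / 2) * (e ^ 2 / 2) ^ ((1 + γ) / 2) = |e| ^ (1 + γ) := by
    rw [← Real.mul_rpow (by norm_num) (by positivity)]
    have h2 : (2:ℝ) * (e ^ 2 / 2) = |e| ^ (2:ℕ) := by
      rw [← sq_abs]; ring
    rw [h2, ← Real.rpow_natCast (|e|) 2, ← Real.rpow_mul habs]
    norm_num
    congr 1
    ring
  have hsplit : |e| ^ (1 + γ) = |e| * |e| ^ γ := by
    rw [Real.rpow_add' habs (by nlinarith [hγ.1] : (1:ℝ) + γ ≠ 0), Real.rpow_one]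
  have heΓ : e * Γ ≤ P / η * C₀ * |e| ^ γ * |e| := by
    calc e * Γ ≤ |e * Γ| := le_abs_self _
      _ = |e| * |Γ| := by rw [abs_mul]
      _ ≤ |e| * (P / η * C₀ * |e| ^ γ) := by
          exact mul_le_mul_of_nonneg_left hΓ habs
      _ = P / η * C₀ * |e| ^ γ * |e| := by ring
  have h1 : e * (-(P / η) * k * |e| ^ γ * Real.sign e + Γ)
      = -(P / η) * k * |e| ^ γ * |e| + e * Γ := by
    have : e * (-(P / η) * k * |e| ^ γ * Real.sign e)
        = -(P / η) * k * |e| ^ γ * (e * Real.sign e) := by ring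
    rw [mul_add, this, hsign]
  rw [h1]
  have : -(P / η) * (k - C₀) * (2:ℝ) ^ ((1 + γ) / 2) * (e ^ 2 / 2) ^ ((1 + γ) / 2)
      = -(P / η) * (k - C₀) * (|e| * |e| ^ γ) := by
    rw [mul_assoc (-(P / η) * (k - C₀)), hrhs, hsplit]
  rw [this]
  nlinarith [heΓ]
end

section
/- Let c > 0 and θ ∈ (0,1) be constants, and let V : ℝ≥0 → ℝ≥0 be a differentiable function satisfying V'(t) ≤ −c V(t)^θ for all t ≥ 0 with V(t) > 0. Then V(t) = 0 for all t ≥ V(0)^{1−θ} / (c(1−θ)). -/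
/-- If `V : ℝ≥0 → ℝ≥0` is differentiable with `V' ≤ −c V^θ`
whenever `V > 0` (with `c > 0`, `θ ∈ (0,1)`), then `V(t) = 0` for all
`t ≥ V(0)^{1−θ}/(c(1−θ))`.  The function `V` is modelled as a real function on
`ℝ` which is nonnegative and differentiable (within `[0,∞)`, with derivative
`V'`) on `[0,∞)`. -/
theorem finite_time_decay_of_diff_ineq
    (c θ : ℝ) (hc : 0 < c) (hθ : θ ∈ Set.Ioo (0:ℝ) 1)
    (V V' : ℝ → ℝ)
    (hVnn : ∀ t ≥ (0:ℝ), 0 ≤ V t)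
    (hVderiv : ∀ t ≥ (0:ℝ), HasDerivWithinAt V (V' t) (Set.Ici 0) t)
    (hVineq : ∀ t ≥ (0:ℝ), 0 < V t → V' t ≤ -c * V t ^ θ) :
    ∀ t : ℝ, V 0 ^ (1 - θ) / (c * (1 - θ)) ≤ t → V t = 0 := by
  obtain ⟨hθ0, hθ1⟩ := hθ
  have h1θ : 0 < 1 - θ := by linarith
  have hVcont : ∀ a b : ℝ, 0 ≤ a → ContinuousOn V (Set.Icc a b) := by
    intro a b ha x hx
    exact ((hVderiv x (le_trans ha hx.1)).continuousWithinAt).mono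
      (fun y hy => le_trans ha hy.1)
  -- Key decay estimate on an interval where V is positive in the interior
  have key : ∀ a b : ℝ, 0 ≤ a → a ≤ b → (∀ s ∈ Set.Ioo a b, 0 < V s) →
      V b ^ (1 - θ) + c * (1 - θ) * (b - a) ≤ V a ^ (1 - θ) := by
    intro a b ha hab hpos
    set g : ℝ → ℝ := fun s => V s ^ (1 - θ) + c * (1 - θ) * s with hg
    have hgcont : ContinuousOn g (Set.Icc a b) := by
      apply ContinuousOn.add
      · exact (hVcont a b ha).rpow_const (fun x _ => Or.inr (le_of_lt h1θ))
      · exact (continuous_const.mul continuous_id).continuousOn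
    have hganti : AntitoneOn g (Set.Icc a b) := by
      apply antitoneOn_of_hasDerivWithinAt_nonpos (convex_Icc a b) hgcont
        (f' := fun x => V' x * (1 - θ) * V x ^ (1 - θ - 1) + c * (1 - θ))
      · intro x hx
        rw [interior_Icc] at hx
        have hx0 : 0 < x := lt_of_le_of_lt ha hx.1
        have hVx : 0 < V x := hpos x hx
        have hdV : HasDerivAt V (V' x) x :=
          (hVderiv x hx0.le).hasDerivAt (Ici_mem_nhds hx0)
        have hdg : HasDerivAt g (V' x * (1 - θ) * V x ^ (1 - θ - 1) + c * (1 - θ)) x := by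
          apply HasDerivAt.add
          · exact hdV.rpow_const (Or.inl (ne_of_gt hVx))
          · simpa using (hasDerivAt_id x).const_mul (c * (1 - θ))
        exact hdg.hasDerivWithinAt
      · intro x hx
        rw [interior_Icc] at hx
        have hx0 : 0 < x := lt_of_le_of_lt ha hx.1
        have hVx : 0 < V x := hpos x hx
        have hineq : V' x ≤ -c * V x ^ θ := hVineq x hx0.le hVx
        have hA : 0 ≤ V x ^ (1 - θ - 1) := Real.rpow_nonneg hVx.le _
        have hAB : V x ^ (1 - θ - 1) * V x ^ θ = 1 := by
          rw [← Real.rpow_add hVx]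
          norm_num
        have hmul : V' x * ((1 - θ) * V x ^ (1 - θ - 1)) ≤
            (-c * V x ^ θ) * ((1 - θ) * V x ^ (1 - θ - 1)) := by
          apply mul_le_mul_of_nonneg_right hineq
          positivity
        have heq : (-c * V x ^ θ) * ((1 - θ) * V x ^ (1 - θ - 1)) = -c * (1 - θ) := by
          linear_combination (-(c * (1 - θ))) * hAB
        nlinarith [hmul, heq]
    have := hganti (Set.left_mem_Icc.2 hab) (Set.right_mem_Icc.2 hab) hab
    simp only [hg] at this
    linarith
  -- Main bound: if V t > 0 then V t ^ (1-θ) + c(1-θ)t ≤ V 0 ^ (1-θ)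
  have main : ∀ t : ℝ, 0 ≤ t → 0 < V t →
      V t ^ (1 - θ) + c * (1 - θ) * t ≤ V 0 ^ (1 - θ) := by
    intro t ht hVt
    by_cases hall : ∀ s ∈ Set.Ioo (0:ℝ) t, 0 < V s
    · have := key 0 t le_rfl ht hall
      simpa using this
    · exfalso
      push_neg at hall
      obtain ⟨s, hs, hVs⟩ := hall
      have hVs0 : V s = 0 := le_antisymm hVs (hVnn s hs.1.le)
      set S : Set ℝ := Set.Icc 0 t ∩ V ⁻¹' {0} with hS
      have hSne : S.Nonempty := ⟨s, ⟨hs.1.le, hs.2.le⟩, hVs0⟩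
      have hSbdd : BddAbove S := ⟨t, fun x hx => hx.1.2⟩
      have hSclosed : IsClosed S :=
        ContinuousOn.preimage_isClosed_of_isClosed (hVcont 0 t le_rfl)
          isClosed_Icc isClosed_singleton
      set σ := sSup S with hσ
      have hσmem : σ ∈ S := hSclosed.csSup_mem hSne hSbdd
      have hσ0 : 0 ≤ σ := hσmem.1.1
      have hVσ : V σ = 0 := hσmem.2
      have hσt : σ < t := by
        rcases lt_or_eq_of_le hσmem.1.2 with h | h
        · exact h
        · rw [h] at hVσ; rw [hVσ] at hVt; exact absurd hVt (lt_irrefl 0)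
      have hposσ : ∀ u ∈ Set.Ioo σ t, 0 < V u := by
        intro u hu
        rcases lt_or_eq_of_le (hVnn u (le_trans hσ0 hu.1.le)) with h | h
        · exact h
        · exfalso
          have : u ∈ S := ⟨⟨le_trans hσ0 hu.1.le, hu.2.le⟩, h.symm⟩
          exact absurd (le_csSup hSbdd this) (not_le.2 hu.1)
      have hkey := key σ t hσ0 hσt.le hposσ
      rw [hVσ, Real.zero_rpow (ne_of_gt h1θ)] at hkey
      have h1 : 0 < V t ^ (1 - θ) := Real.rpow_pos_of_pos hVt _
      have hp : 0 < c * (1 - θ) * (t - σ) :=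
        mul_pos (mul_pos hc h1θ) (sub_pos.2 hσt)
      linarith
  -- Conclusion
  intro t ht
  have hden : 0 < c * (1 - θ) := by positivity
  have hT0 : 0 ≤ V 0 ^ (1 - θ) / (c * (1 - θ)) :=
    div_nonneg (Real.rpow_nonneg (hVnn 0 le_rfl) _) hden.le
  have ht0 : 0 ≤ t := le_trans hT0 ht
  by_contra hne
  have hVt : 0 < V t := lt_of_le_of_ne (hVnn t ht0) (Ne.symm hne)
  have hb := main t ht0 hVt
  have hmul : V 0 ^ (1 - θ) ≤ c * (1 - θ) * t := by
    rw [div_le_iff₀ hden] at ht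
    linarith [ht]
  have h1 : 0 < V t ^ (1 - θ) := Real.rpow_pos_of_pos hVt _
  linarith
end

section
/- Consider the coupled Fokker–Planck model of a TCL population, where the net flux function g satisfies conditions (G1)–(G3), and the initial data f₀(·,0) = f₀^{a0} on [x_L, x̲(0)] and f₀(·,0) = f₀^{b0} on [x̲(0), x̄(0)] are continuous and nonnegative, as are the initial data for f₁. Then the OFF-state density is nonnegative for all time: f₀(x,t) ≥ 0 for all t ≥ 0 and all x ∈ [x_L, x̄(t)]. -/
/-!
For large `μ` and `λ` the weighted density `e^{μx - λt} f₀(x, t)` attains its minimum over the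
compact region `{0 ≤ t ≤ T, x_L ≤ x ≤ x̄(t)}`. If that minimum were negative, each possible
location of the minimum point is excluded: `t = 0` by the initial data, `x = x̄(t)` by the
Dirichlet condition, `x = x_L` because the Robin condition with `μ > 2|α₀ - u| / σ²` forces
`f₀ ≥ 0` there, and `x = x̲(t)` because at a minimum the left derivative of `f₀` is at most the
right one, whereas the jump condition together with `∂ₓf₁(x̲⁺) > 0` says the opposite. At an
interior point, the first- and second-order conditions in `x` and the one-sided condition in `t`
turn the Fokker–Planck equation into `(λ - 1 - κ) f₀ ≥ 0`, where `κ` bounds the zeroth-order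
coefficient of the weighted operator; the switching flux costs at most `|f₀|` since
`g(s, τ) ≤ g(0, τ) + |s| ≤ |s|` by (G1) and (G3).
-/

open Set

/-- Right (one-sided) spatial derivative `∂_x f(x⁺, t)`. -/
noncomputable def rightD (f : ℝ → ℝ → ℝ) (x t : ℝ) : ℝ :=
  derivWithin (fun ξ => f ξ t) (Ici x) x

/-- Left (one-sided) spatial derivative `∂_x f(x⁻, t)`. -/
noncomputable def leftD (f : ℝ → ℝ → ℝ) (x t : ℝ) : ℝ :=
  derivWithin (fun ξ => f ξ t) (Iic x) x

open Filter Topology Real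

theorem IsMinOn.isLocalMinOn_of_mem_nhdsWithin {α β : Type*} [TopologicalSpace α] [Preorder β]
    {f : α → β} {s t : Set α} {a : α}
    (hf : IsMinOn f s a) (hs : s ∈ 𝓝[t] a) : IsLocalMinOn f t a :=
  mem_of_superset hs hf

theorem IsLocalMinOn.hasDerivWithinAt_Ici_nonneg {f : ℝ → ℝ} {a f' : ℝ}
    (h : IsLocalMinOn f (Ici a) a) (hf : HasDerivWithinAt f f' (Ici a) a) : 0 ≤ f' := by
  have hy : (1 : ℝ) ∈ posTangentConeAt (Ici a) a :=
    mem_posTangentConeAt_of_segment_subset (by simp [segment_eq_Icc, Icc_subset_Ici_self])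
  simpa using h.hasFDerivWithinAt_nonneg hf.hasFDerivWithinAt hy

theorem IsLocalMinOn.hasDerivWithinAt_Iic_nonpos {f : ℝ → ℝ} {a f' : ℝ}
    (h : IsLocalMinOn f (Iic a) a) (hf : HasDerivWithinAt f f' (Iic a) a) : f' ≤ 0 := by
  have hy : (-1 : ℝ) ∈ posTangentConeAt (Iic a) a :=
    mem_posTangentConeAt_of_segment_subset
      (by simp [segment_eq_Icc', Icc_subset_Iic_self, ← sub_eq_add_neg])
  simpa using h.hasFDerivWithinAt_nonneg hf.hasFDerivWithinAt hy

theorem IsLocalMin.hasDerivAt_nonneg_of_eventually_hasDerivAt {V D : ℝ → ℝ} {x₀ c : ℝ}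
    (hmin : IsLocalMin V x₀) (hV : ∀ᶠ x in 𝓝 x₀, HasDerivAt V (D x) x)
    (hD : HasDerivAt D c x₀) : 0 ≤ c := by
  by_contra! hc
  have hD₀ : D x₀ = 0 := hmin.hasDerivAt_eq_zero hV.self_of_nhds
  have hDneg : ∀ᶠ x in 𝓝[>] x₀, D x < 0 := by
    filter_upwards [nhdsWithin_le_nhds
      (eventually_nhdsWithin_sign_eq_of_deriv_neg (hD.deriv ▸ hc) hD₀),
      self_mem_nhdsWithin] with x hx hxgt
    rwa [sign_neg (sub_neg.2 hxgt), sign_eq_neg_one_iff] at hx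
  obtain ⟨b, hb, hsub⟩ := mem_nhdsGT_iff_exists_Ioc_subset.1 <| hDneg.and <|
    (hV.filter_mono nhdsWithin_le_nhds).and (hmin.filter_mono nhdsWithin_le_nhds)
  have hderiv : ∀ x ∈ Icc x₀ b, HasDerivAt V (D x) x := fun x hx =>
    hx.1.eq_or_lt.elim (fun h => h ▸ hV.self_of_nhds) fun h => (hsub ⟨h, hx.2⟩).2.1
  obtain ⟨ξ, hξ, hslope⟩ := exists_hasDerivAt_eq_slope V D hb
    (fun x hx => (hderiv x hx).continuousAt.continuousWithinAt)
    (fun x hx => hderiv x (Ioo_subset_Icc_self hx))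
  have : 0 ≤ D ξ :=
    hslope ▸ div_nonneg (sub_nonneg.2 (hsub ⟨hb, le_rfl⟩).2.2) (sub_pos.2 hb).le
  exact (hsub ⟨hξ.1, hξ.2.le⟩).1.not_ge this

theorem apply_le_apply_zero_add_abs {h : ℝ → ℝ} (hd : Differentiable ℝ h)
    (hb : ∀ x, |deriv h x| ≤ 1) (s : ℝ) : h s ≤ h 0 + |s| := by
  have := convex_univ.norm_image_sub_le_of_norm_deriv_le (fun x _ => hd x) (fun x _ => hb x)
    (mem_univ 0) (mem_univ s)
  simp only [Real.norm_eq_abs, one_mul, sub_zero] at this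
  linarith [le_abs_self (h s - h 0)]

theorem le_abs_of_apply_zero_nonpos {g : ℝ → ℝ → ℝ}
    (hg : ContDiff ℝ 1 (fun p : ℝ × ℝ => g p.1 p.2)) (hg₀ : ∀ τ, g 0 τ ≤ 0)
    (hg' : ∀ s τ, |deriv (fun s' => g s' τ) s| ≤ 1) (s τ : ℝ) : g s τ ≤ |s| := by
  have hdiff : Differentiable ℝ fun s' => g s' τ :=
    (hg.differentiable one_ne_zero).comp (differentiable_id.prodMk (differentiable_const τ))
  linarith [hg₀ τ, apply_le_apply_zero_add_abs hdiff (hg' · τ) s]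

theorem hasDerivWithinAt_exp_affine_mul {f : ℝ → ℝ} {f' x : ℝ} {s : Set ℝ}
    (hf : HasDerivWithinAt f f' s x) (μ c : ℝ) :
    HasDerivWithinAt (fun y => exp (μ * y - c) * f y) (exp (μ * x - c) * (μ * f x + f')) s x := by
  have he : HasDerivAt (fun y => exp (μ * y - c)) (exp (μ * x - c) * μ) x := by
    simpa using (((hasDerivAt_id x).const_mul μ).sub_const c).exp
  exact (he.hasDerivWithinAt.mul hf).congr_deriv (by ring)

section ExpAffineMul

variable {f : ℝ → ℝ} {μ c a f' : ℝ}

theorem IsLocalMinOn.exp_affine_mul_Ici_nonneg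
    (h : IsLocalMinOn (fun y => exp (μ * y - c) * f y) (Ici a) a)
    (hf : HasDerivWithinAt f f' (Ici a) a) : 0 ≤ μ * f a + f' :=
  nonneg_of_mul_nonneg_right
    (h.hasDerivWithinAt_Ici_nonneg (hasDerivWithinAt_exp_affine_mul hf μ c)) (exp_pos _)

theorem IsLocalMinOn.exp_affine_mul_Iic_nonpos
    (h : IsLocalMinOn (fun y => exp (μ * y - c) * f y) (Iic a) a)
    (hf : HasDerivWithinAt f f' (Iic a) a) : μ * f a + f' ≤ 0 :=
  nonpos_of_mul_nonpos_right
    (h.hasDerivWithinAt_Iic_nonpos (hasDerivWithinAt_exp_affine_mul hf μ c)) (exp_pos _)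

theorem IsLocalMin.derivWithin_Iic_le_derivWithin_Ici_of_exp_affine_mul
    (h : IsLocalMin (fun y => exp (μ * y - c) * f y) a)
    (hl : DifferentiableWithinAt ℝ f (Iic a) a) (hr : DifferentiableWithinAt ℝ f (Ici a) a) :
    derivWithin f (Iic a) a ≤ derivWithin f (Ici a) a := by
  linarith [(h.on _).exp_affine_mul_Iic_nonpos hl.hasDerivWithinAt,
    (h.on _).exp_affine_mul_Ici_nonneg hr.hasDerivWithinAt]

theorem nonneg_of_isLocalMinOn_exp_affine_mul_of_robin {σ β : ℝ} (hσ : σ ≠ 0)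
    (h : IsLocalMinOn (fun y => exp (μ * y - c) * f y) (Ici a) a)
    (hf : DifferentiableWithinAt ℝ f (Ici a) a)
    (hbc : σ ^ 2 / 2 * derivWithin f (Ici a) a = β * f a) (hμ : 2 * |β| / σ ^ 2 < μ) :
    0 ≤ f a := by
  have hσ2 : 0 < σ ^ 2 := by positivity
  have hderiv : derivWithin f (Ici a) a = 2 * β / σ ^ 2 * f a := by
    field_simp; linarith
  have hcoef : 0 < μ + 2 * β / σ ^ 2 := by
    have : -(2 * |β| / σ ^ 2) ≤ 2 * β / σ ^ 2 := by
      rw [← neg_div]; gcongr; linarith [neg_abs_le β]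
    linarith
  have := h.exp_affine_mul_Ici_nonneg hf.hasDerivWithinAt
  rw [hderiv, ← add_mul] at this
  exact nonneg_of_mul_nonneg_right this hcoef

end ExpAffineMul

/-- At the minimum, `V' = 0` gives `f' = -μ f` and `V'' ≥ 0` gives `f'' ≥ μ² f`, where
`V = e^{μ y - c} f`; substitute both into the derivative of the flux. -/
theorem IsLocalMin.le_flux_deriv_of_exp_affine_mul {f a : ℝ → ℝ} {σ μ c a' F x : ℝ}
    (hσ : σ ≠ 0) (h : IsLocalMin (fun y => exp (μ * y - c) * f y) x)
    (hf : ∀ᶠ y in 𝓝 x, DifferentiableAt ℝ f y) (ha : HasDerivAt a a' x)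
    (hflux : HasDerivAt (fun y => σ ^ 2 / 2 * deriv f y - a y * f y) F x) :
    (σ ^ 2 * μ ^ 2 / 2 - a' + μ * a x) * f x ≤ F := by
  set d := deriv f
  have hf' : HasDerivAt f (d x) x := hf.self_of_nhds.hasDerivAt
  have hd : HasDerivAt d (2 / σ ^ 2 * (F + (a' * f x + a x * d x))) x :=
    ((hflux.add (ha.mul hf')).const_mul (2 / σ ^ 2)).congr_of_eventuallyEq <|
      .of_forall fun y => by simp only [Pi.add_apply, Pi.mul_apply]; field_simp; ring
  have hV : ∀ᶠ y in 𝓝 x, HasDerivAt (fun y => exp (μ * y - c) * f y)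
      (exp (μ * y - c) * (μ * f y + d y)) y :=
    hf.mono fun y hy => hasDerivWithinAt_univ.1
      (hasDerivWithinAt_exp_affine_mul hy.hasDerivAt.hasDerivWithinAt μ c)
  have hcrit : μ * f x + d x = 0 :=
    (mul_eq_zero.1 (h.hasDerivAt_eq_zero hV.self_of_nhds)).resolve_left (exp_pos _).ne'
  have hV' := hasDerivWithinAt_univ.1 (hasDerivWithinAt_exp_affine_mul
    ((hf'.const_mul μ).add hd).hasDerivWithinAt μ c)
  have hconvex := nonneg_of_mul_nonneg_right
    (h.hasDerivAt_nonneg_of_eventually_hasDerivAt hV hV') (exp_pos _)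
  simp only [Pi.add_apply] at hconvex
  rw [hcrit, show d x = -(μ * f x) by linarith] at hconvex
  have : F - (σ ^ 2 * μ ^ 2 / 2 - a' + μ * a x) * f x = σ ^ 2 / 2 *
      (μ * 0 + (μ * -(μ * f x) + 2 / σ ^ 2 * (F + (a' * f x + a x * -(μ * f x))))) := by
    field_simp; ring
  linarith [mul_nonneg (by positivity : (0 : ℝ) ≤ σ ^ 2 / 2) hconvex]

theorem nonneg_of_isLocalMin_of_fokkerPlanck {f : ℝ → ℝ → ℝ} {a : ℝ → ℝ}
    {σ μ lam a' F G x t : ℝ} (hσ : σ ≠ 0)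
    (hx : IsLocalMin (fun y => exp (μ * y - lam * t) * f y t) x)
    (ht : IsLocalMinOn (fun τ => exp (μ * x - lam * τ) * f x τ) (Iic t) t)
    (hf : ∀ᶠ y in 𝓝 x, DifferentiableAt ℝ (fun ξ => f ξ t) y) (ha : HasDerivAt a a' x)
    (hflux : HasDerivAt (fun y => σ ^ 2 / 2 * deriv (fun ξ => f ξ t) y - a y * f y t) F x)
    (hft : HasDerivAt (fun τ => f x τ) (F - G) t) (hG : G ≤ |f x t|)
    (hlam : σ ^ 2 * μ ^ 2 / 2 - a' + μ * a x + 1 < lam) : 0 ≤ f x t := by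
  by_contra! hneg
  have hspace := hx.le_flux_deriv_of_exp_affine_mul hσ hf ha hflux
  have ht' : IsLocalMinOn (fun τ => exp (-lam * τ - -(μ * x)) * f x τ) (Iic t) t := by
    convert ht using 4; ring
  have htime := ht'.exp_affine_mul_Iic_nonpos hft.hasDerivWithinAt
  rw [abs_of_neg hneg] at hG
  nlinarith [mul_pos (sub_pos.2 hlam) (neg_pos.2 hneg)]

def betweenGraphs (K : Set ℝ) (a b : ℝ → ℝ) : Set (ℝ × ℝ) :=
  {p | p.2 ∈ K ∧ a p.2 ≤ p.1 ∧ p.1 ≤ b p.2}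

section BetweenGraphs

variable {K : Set ℝ} {a b : ℝ → ℝ}

theorem isCompact_betweenGraphs (hK : IsCompact K) (ha : ContinuousOn a K)
    (hb : ContinuousOn b K) : IsCompact (betweenGraphs K a b) := by
  obtain ⟨m, hm⟩ := hK.bddBelow_image ha
  obtain ⟨M, hM⟩ := hK.bddAbove_image hb
  set S : Set (ℝ × ℝ) := Prod.snd ⁻¹' K
  have hS : IsClosed S := hK.isClosed.preimage continuous_snd
  have ha' : ContinuousOn (a ∘ Prod.snd) S := ha.comp continuousOn_snd fun _ h => h
  have hb' : ContinuousOn (b ∘ Prod.snd) S := hb.comp continuousOn_snd fun _ h => h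
  have hclosed : IsClosed (betweenGraphs K a b) := by
    convert (hS.isClosed_le ha' continuousOn_fst).inter (hS.isClosed_le continuousOn_fst hb')
      using 1
    ext p
    simp only [betweenGraphs, mem_ofPred_eq, mem_inter_iff, Function.comp_apply]
    tauto
  refine ((isCompact_Icc (a := m) (b := M)).prod hK).of_isClosed_subset hclosed
    fun p ⟨ht, hap, hpb⟩ => ⟨⟨(hm ⟨p.2, ht, rfl⟩).trans hap, hpb.trans (hM ⟨p.2, ht, rfl⟩)⟩, ht⟩

theorem ContinuousOn.betweenGraphs_union {c : ℝ → ℝ} {f : ℝ × ℝ → ℝ} (hK : IsCompact K)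
    (ha : ContinuousOn a K) (hb : ContinuousOn b K) (hc : ContinuousOn c K)
    (hab : ContinuousOn f (betweenGraphs K a b)) (hbc : ContinuousOn f (betweenGraphs K b c)) :
    ContinuousOn f (betweenGraphs K a c) := by
  refine (hab.union_of_isClosed hbc (isCompact_betweenGraphs hK ha hb).isClosed
    (isCompact_betweenGraphs hK hb hc).isClosed).mono fun p ⟨ht, hap, hpc⟩ => ?_
  exact (le_total p.1 (b p.2)).imp (fun h => ⟨ht, hap, h⟩) fun h => ⟨ht, h, hpc⟩

variable {v : ℝ × ℝ → ℝ} {x t : ℝ}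

theorem IsMinOn.isLocalMin_betweenGraphs_slice (h : IsMinOn v (betweenGraphs K a b) (x, t))
    (ht : t ∈ K) (hx : x ∈ Ioo (a t) (b t)) : IsLocalMin (fun y => v (y, t)) x :=
  (h.on_preimage fun y => (y, t)).isLocalMin
    (mem_of_superset (isOpen_Ioo.mem_nhds hx) fun _ hy => ⟨ht, hy.1.le, hy.2.le⟩)

theorem IsMinOn.isLocalMinOn_betweenGraphs_Ici (h : IsMinOn v (betweenGraphs K a b) (a t, t))
    (ht : t ∈ K) (hab : a t < b t) : IsLocalMinOn (fun y => v (y, t)) (Ici (a t)) (a t) :=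
  (h.on_preimage fun y => (y, t)).isLocalMinOn_of_mem_nhdsWithin
    (mem_of_superset (Ico_mem_nhdsGE hab) fun _ hy => ⟨ht, hy.1, hy.2.le⟩)

theorem IsMinOn.isLocalMinOn_betweenGraphs_Iic (h : IsMinOn v (betweenGraphs K a b) (x, t))
    (hK : K ∈ 𝓝[≤] t) (hx : x ∈ Ioo (a t) (b t)) (ha : ContinuousAt a t)
    (hb : ContinuousAt b t) : IsLocalMinOn (fun τ => v (x, τ)) (Iic t) t := by
  refine (h.on_preimage fun τ => (x, τ)).isLocalMinOn_of_mem_nhdsWithin ?_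
  filter_upwards [hK, nhdsWithin_le_nhds (ha.eventually (gt_mem_nhds hx.1)),
    nhdsWithin_le_nhds (hb.eventually (lt_mem_nhds hx.2))] with τ hτ haτ hbτ
  exact ⟨hτ, haτ.le, hbτ.le⟩

end BetweenGraphs

theorem nonneg_of_nonneg_at_isMinOn_exp_mul {Ω : Set (ℝ × ℝ)} {f : ℝ → ℝ → ℝ}
    (hΩ : IsCompact Ω) (hf : ContinuousOn (fun p : ℝ × ℝ => f p.1 p.2) Ω) (μ lam : ℝ)
    (hmin : ∀ x t, (x, t) ∈ Ω →
      IsMinOn (fun p : ℝ × ℝ => exp (μ * p.1 - lam * p.2) * f p.1 p.2) Ω (x, t) → 0 ≤ f x t)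
    {x t : ℝ} (hxt : (x, t) ∈ Ω) : 0 ≤ f x t := by
  obtain ⟨⟨xm, tm⟩, hpm, hm⟩ := hΩ.exists_isMinOn ⟨_, hxt⟩
    (f := fun p : ℝ × ℝ => exp (μ * p.1 - lam * p.2) * f p.1 p.2)
    ((Continuous.continuousOn (by fun_prop)).mul hf)
  refine nonneg_of_mul_nonneg_right ?_ (exp_pos (μ * x - lam * t))
  exact (mul_nonneg (exp_pos _).le (hmin xm tm hpm hm)).trans (hm hxt)

theorem off_state_nonneg_general
    (σ C R xL : ℝ)
    (hσ : 0 < σ)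
    (xlo xhi u xa : ℝ → ℝ)
    (hu_cont : ContinuousOn u (Ici 0)) (hxa_cont : ContinuousOn xa (Ici 0))
    (hxlo_deriv : ∀ t ≥ (0:ℝ), HasDerivAt xlo (u t) t)
    (hxhi_deriv : ∀ t ≥ (0:ℝ), HasDerivAt xhi (u t) t)
    (f₀ f₁ α₀ : ℝ → ℝ → ℝ) (g : ℝ → ℝ → ℝ)
    (hg : ContDiff ℝ 1 (fun p : ℝ × ℝ => g p.1 p.2))
    (hα₀ : ∀ x t, α₀ x t = (xa t - x) / (C * R))
    -- continuity up to the closures of the four space-time regions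
    (hf₀_cont_a : ContinuousOn (fun p : ℝ × ℝ => f₀ p.1 p.2)
      {p : ℝ × ℝ | 0 ≤ p.2 ∧ xL ≤ p.1 ∧ p.1 ≤ xlo p.2})
    (hf₀_cont_b : ContinuousOn (fun p : ℝ × ℝ => f₀ p.1 p.2)
      {p : ℝ × ℝ | 0 ≤ p.2 ∧ xlo p.2 ≤ p.1 ∧ p.1 ≤ xhi p.2})
    -- spatial differentiability in the interiors of the regions
    (hf₀_x : ∀ t > (0:ℝ), ∀ x ∈ Ioo xL (xlo t) ∪ Ioo (xlo t) (xhi t),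
      DifferentiableAt ℝ (fun ξ => f₀ ξ t) x)
    -- existence of the one-sided spatial derivatives (conditions (F2), (F3))
    (hf₀_xL : ∀ t > (0:ℝ), DifferentiableWithinAt ℝ (fun ξ => f₀ ξ t) (Ici xL) xL)
    (hf₀_xloL : ∀ t > (0:ℝ), DifferentiableWithinAt ℝ (fun ξ => f₀ ξ t) (Iic (xlo t)) (xlo t))
    (hf₀_xloR : ∀ t > (0:ℝ), DifferentiableWithinAt ℝ (fun ξ => f₀ ξ t) (Ici (xlo t)) (xlo t))
    -- the four coupled Fokker–Planck equations
    (hpde_a : ∀ t > (0:ℝ), ∀ x ∈ Ioo xL (xlo t), ∃ Fx : ℝ,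
      HasDerivAt (fun ξ => σ ^ 2 / 2 * deriv (fun ζ => f₀ ζ t) ξ - (α₀ ξ t - u t) * f₀ ξ t)
        Fx x ∧
      HasDerivAt (fun τ => f₀ x τ) Fx t)
    (hpde_b0 : ∀ t > (0:ℝ), ∀ x ∈ Ioo (xlo t) (xhi t), ∃ Fx : ℝ,
      HasDerivAt (fun ξ => σ ^ 2 / 2 * deriv (fun ζ => f₀ ζ t) ξ - (α₀ ξ t - u t) * f₀ ξ t)
        Fx x ∧
      HasDerivAt (fun τ => f₀ x τ) (Fx - g (f₀ x t) (f₁ x t)) t)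
    -- boundary conditions
    (hbcL : ∀ t > (0:ℝ), σ ^ 2 / 2 * rightD f₀ xL t = (α₀ xL t - u t) * f₀ xL t)
    (hbc_jump_lo : ∀ t > (0:ℝ),
      leftD f₀ (xlo t) t = rightD f₀ (xlo t) t + rightD f₁ (xlo t) t)
    (hbc0_hi : ∀ t > (0:ℝ), f₀ (xhi t) t = 0)
    -- sign conditions at the deadband boundaries
    (hbc_sign1 : ∀ t > (0:ℝ), 0 < rightD f₁ (xlo t) t)
    -- conditions (G1)–(G3) on the net switching flux
    (hG1 : ∀ τ : ℝ, g 0 τ ≤ 0)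
    (hG3 : ∀ s τ : ℝ, |deriv (fun s' => g s' τ) s| + |deriv (fun τ' => g s τ') τ| ≤ 1)
    -- nonnegative (continuous) initial data
    (hIC0 : ∀ x ∈ Icc xL (xhi 0), 0 ≤ f₀ x 0) :
    ∀ t ≥ (0:ℝ), ∀ x ∈ Icc xL (xhi t), 0 ≤ f₀ x t := by
  intro T hT x hx
  have hxlo : ContinuousOn xlo (Icc 0 T) := fun t ht =>
    (hxlo_deriv t ht.1).continuousAt.continuousWithinAt
  have hxhi : ContinuousOn xhi (Icc 0 T) := fun t ht =>
    (hxhi_deriv t ht.1).continuousAt.continuousWithinAt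
  set Ω := betweenGraphs (Icc 0 T) (fun _ => xL) xhi
  have hΩ : IsCompact Ω := isCompact_betweenGraphs isCompact_Icc continuousOn_const hxhi
  have hΩt : MapsTo Prod.snd Ω (Ici 0) := fun p hp => hp.1.1
  obtain ⟨B, hB⟩ := hΩ.exists_bound_of_continuousOn
      (f := fun p : ℝ × ℝ => α₀ p.1 p.2 - u p.2) <| by
    simp only [hα₀]
    exact (((hxa_cont.comp continuousOn_snd hΩt).sub continuousOn_fst).div_const _).sub
      (hu_cont.comp continuousOn_snd hΩt)
  set μ := 2 * B / σ ^ 2 + 1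
  set lam := σ ^ 2 * μ ^ 2 / 2 + (C * R)⁻¹ + μ * B + 2 with hlam_def
  refine nonneg_of_nonneg_at_isMinOn_exp_mul hΩ
    (ContinuousOn.betweenGraphs_union isCompact_Icc continuousOn_const hxlo hxhi
      (hf₀_cont_a.mono fun p hp => ⟨hp.1.1, hp.2⟩) (hf₀_cont_b.mono fun p hp => ⟨hp.1.1, hp.2⟩))
    μ lam (fun xs ts hp hmin => ?_) ⟨⟨hT, le_rfl⟩, hx⟩
  have hβ : |α₀ xs ts - u ts| ≤ B := hB _ hp
  obtain ⟨⟨hts0, htsT⟩, hxsL, hxsH⟩ : (0 ≤ ts ∧ ts ≤ T) ∧ xL ≤ xs ∧ xs ≤ xhi ts := hp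
  obtain rfl | hts := hts0.eq_or_lt
  · exact hIC0 xs ⟨hxsL, hxsH⟩
  obtain hxs | hxsH := hxsH.eq_or_lt
  · simp [hxs, hbc0_hi ts hts]
  obtain rfl | hxsL := hxsL.eq_or_lt
  · refine nonneg_of_isLocalMinOn_exp_affine_mul_of_robin (f := (f₀ · ts)) hσ.ne'
      (hmin.isLocalMinOn_betweenGraphs_Ici ⟨hts0, htsT⟩ hxsH) (hf₀_xL ts hts) (hbcL ts hts) ?_
    calc 2 * |α₀ xL ts - u ts| / σ ^ 2 ≤ 2 * B / σ ^ 2 := by gcongr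
      _ < μ := lt_add_one _
  have hmin_x := hmin.isLocalMin_betweenGraphs_slice ⟨hts0, htsT⟩ ⟨hxsL, hxsH⟩
  have hmin_t := hmin.isLocalMinOn_betweenGraphs_Iic (Icc_mem_nhdsLE_of_mem ⟨hts, htsT⟩)
    ⟨hxsL, hxsH⟩ continuousAt_const (hxhi_deriv ts hts0).continuousAt
  have hdrift : HasDerivAt (fun ξ => α₀ ξ ts - u ts) (-(C * R)⁻¹) xs := by
    simp only [hα₀]
    exact ((((hasDerivAt_id' xs).const_sub _).div_const _).sub_const _).congr_deriv (by ring)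
  have hlam : σ ^ 2 * μ ^ 2 / 2 - -(C * R)⁻¹ + μ * (α₀ xs ts - u ts) + 1 < lam := by
    have hμ : 0 ≤ μ := by have := (abs_nonneg _).trans hβ; positivity
    linarith [mul_le_mul_of_nonneg_left ((le_abs_self _).trans hβ) hμ]
  obtain hlo | rfl | hlo := lt_trichotomy xs (xlo ts)
  · obtain ⟨F, hflux, hft⟩ := hpde_a ts hts xs ⟨hxsL, hlo⟩
    exact nonneg_of_isLocalMin_of_fokkerPlanck hσ.ne' hmin_x hmin_t
      (eventually_of_mem (isOpen_Ioo.mem_nhds ⟨hxsL, hlo⟩) fun y hy => hf₀_x ts hts y (.inl hy))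
      hdrift hflux (by rwa [sub_zero]) (abs_nonneg _) hlam
  · have hkink : leftD f₀ (xlo ts) ts ≤ rightD f₀ (xlo ts) ts :=
      hmin_x.derivWithin_Iic_le_derivWithin_Ici_of_exp_affine_mul (hf₀_xloL ts hts)
        (hf₀_xloR ts hts)
    linarith [hbc_jump_lo ts hts, hbc_sign1 ts hts]
  · obtain ⟨F, hflux, hft⟩ := hpde_b0 ts hts xs ⟨hlo, hxsH⟩
    exact nonneg_of_isLocalMin_of_fokkerPlanck hσ.ne' hmin_x hmin_t
      (eventually_of_mem (isOpen_Ioo.mem_nhds ⟨hlo, hxsH⟩) fun y hy => hf₀_x ts hts y (.inr hy))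
      hdrift hflux hft (le_abs_of_apply_zero_nonpos hg hG1
        (fun s τ => le_of_add_le_of_nonneg_left (hG3 s τ) (abs_nonneg _)) _ _) hlam

/-- non-negativeness of the OFF-state density: for the coupled
Fokker–Planck model of a TCL population, with the net switching flux `g`
satisfying conditions (G1)–(G3) and nonnegative continuous initial data, the
OFF-state density satisfies `f₀(x,t) ≥ 0` for all `t ≥ 0` and `x ∈ [x_L, x̄(t)]`. -/
theorem off_state_nonneg
    (σ C R P xL xH : ℝ)
    (hσ : 0 < σ) (hC : 0 < C) (hR : 0 < R) (hP : 0 < P) (hLH : xL < xH)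
    (xlo xhi u xa : ℝ → ℝ)
    (hu_cont : ContinuousOn u (Ici 0)) (hxa_cont : ContinuousOn xa (Ici 0))
    (hrange : ∀ t ≥ (0:ℝ), xL < xlo t ∧ xlo t < xhi t ∧ xhi t < xH)
    (hxlo_deriv : ∀ t ≥ (0:ℝ), HasDerivAt xlo (u t) t)
    (hxhi_deriv : ∀ t ≥ (0:ℝ), HasDerivAt xhi (u t) t)
    (f₀ f₁ α₀ α₁ : ℝ → ℝ → ℝ) (g : ℝ → ℝ → ℝ)
    (hg : ContDiff ℝ 1 (fun p : ℝ × ℝ => g p.1 p.2))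
    (hα₀ : ∀ x t, α₀ x t = (xa t - x) / (C * R))
    (hα₁ : ∀ x t, α₁ x t = (xa t - x - R * P) / (C * R))
    -- continuity up to the closures of the four space-time regions
    (hf₀_cont_a : ContinuousOn (fun p : ℝ × ℝ => f₀ p.1 p.2)
      {p : ℝ × ℝ | 0 ≤ p.2 ∧ xL ≤ p.1 ∧ p.1 ≤ xlo p.2})
    (hf₀_cont_b : ContinuousOn (fun p : ℝ × ℝ => f₀ p.1 p.2)
      {p : ℝ × ℝ | 0 ≤ p.2 ∧ xlo p.2 ≤ p.1 ∧ p.1 ≤ xhi p.2})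
    (hf₁_cont_b : ContinuousOn (fun p : ℝ × ℝ => f₁ p.1 p.2)
      {p : ℝ × ℝ | 0 ≤ p.2 ∧ xlo p.2 ≤ p.1 ∧ p.1 ≤ xhi p.2})
    (hf₁_cont_c : ContinuousOn (fun p : ℝ × ℝ => f₁ p.1 p.2)
      {p : ℝ × ℝ | 0 ≤ p.2 ∧ xhi p.2 ≤ p.1 ∧ p.1 ≤ xH})
    -- spatial differentiability in the interiors of the regions
    (hf₀_x : ∀ t > (0:ℝ), ∀ x ∈ Ioo xL (xlo t) ∪ Ioo (xlo t) (xhi t),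
      DifferentiableAt ℝ (fun ξ => f₀ ξ t) x)
    (hf₁_x : ∀ t > (0:ℝ), ∀ x ∈ Ioo (xlo t) (xhi t) ∪ Ioo (xhi t) xH,
      DifferentiableAt ℝ (fun ξ => f₁ ξ t) x)
    -- existence of the one-sided spatial derivatives (conditions (F2), (F3))
    (hf₀_xL : ∀ t > (0:ℝ), DifferentiableWithinAt ℝ (fun ξ => f₀ ξ t) (Ici xL) xL)
    (hf₀_xloL : ∀ t > (0:ℝ), DifferentiableWithinAt ℝ (fun ξ => f₀ ξ t) (Iic (xlo t)) (xlo t))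
    (hf₀_xloR : ∀ t > (0:ℝ), DifferentiableWithinAt ℝ (fun ξ => f₀ ξ t) (Ici (xlo t)) (xlo t))
    (hf₀_xhiL : ∀ t > (0:ℝ), DifferentiableWithinAt ℝ (fun ξ => f₀ ξ t) (Iic (xhi t)) (xhi t))
    (hf₁_xloR : ∀ t > (0:ℝ), DifferentiableWithinAt ℝ (fun ξ => f₁ ξ t) (Ici (xlo t)) (xlo t))
    (hf₁_xhiL : ∀ t > (0:ℝ), DifferentiableWithinAt ℝ (fun ξ => f₁ ξ t) (Iic (xhi t)) (xhi t))
    (hf₁_xhiR : ∀ t > (0:ℝ), DifferentiableWithinAt ℝ (fun ξ => f₁ ξ t) (Ici (xhi t)) (xhi t))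
    (hf₁_xH : ∀ t > (0:ℝ), DifferentiableWithinAt ℝ (fun ξ => f₁ ξ t) (Iic xH) xH)
    -- the four coupled Fokker–Planck equations
    (hpde_a : ∀ t > (0:ℝ), ∀ x ∈ Ioo xL (xlo t), ∃ Fx : ℝ,
      HasDerivAt (fun ξ => σ ^ 2 / 2 * deriv (fun ζ => f₀ ζ t) ξ - (α₀ ξ t - u t) * f₀ ξ t)
        Fx x ∧
      HasDerivAt (fun τ => f₀ x τ) Fx t)
    (hpde_b0 : ∀ t > (0:ℝ), ∀ x ∈ Ioo (xlo t) (xhi t), ∃ Fx : ℝ,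
      HasDerivAt (fun ξ => σ ^ 2 / 2 * deriv (fun ζ => f₀ ζ t) ξ - (α₀ ξ t - u t) * f₀ ξ t)
        Fx x ∧
      HasDerivAt (fun τ => f₀ x τ) (Fx - g (f₀ x t) (f₁ x t)) t)
    (hpde_b1 : ∀ t > (0:ℝ), ∀ x ∈ Ioo (xlo t) (xhi t), ∃ Fx : ℝ,
      HasDerivAt (fun ξ => σ ^ 2 / 2 * deriv (fun ζ => f₁ ζ t) ξ - (α₁ ξ t - u t) * f₁ ξ t)
        Fx x ∧
      HasDerivAt (fun τ => f₁ x τ) (Fx + g (f₀ x t) (f₁ x t)) t)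
    (hpde_c : ∀ t > (0:ℝ), ∀ x ∈ Ioo (xhi t) xH, ∃ Fx : ℝ,
      HasDerivAt (fun ξ => σ ^ 2 / 2 * deriv (fun ζ => f₁ ζ t) ξ - (α₁ ξ t - u t) * f₁ ξ t)
        Fx x ∧
      HasDerivAt (fun τ => f₁ x τ) Fx t)
    -- boundary conditions
    (hbcL : ∀ t > (0:ℝ), σ ^ 2 / 2 * rightD f₀ xL t = (α₀ xL t - u t) * f₀ xL t)
    (hbc_jump_lo : ∀ t > (0:ℝ),
      leftD f₀ (xlo t) t = rightD f₀ (xlo t) t + rightD f₁ (xlo t) t)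
    (hbc0_hi : ∀ t > (0:ℝ), f₀ (xhi t) t = 0)
    (hbc1_lo : ∀ t > (0:ℝ), f₁ (xlo t) t = 0)
    (hbc_jump_hi : ∀ t > (0:ℝ),
      rightD f₁ (xhi t) t = leftD f₀ (xhi t) t + leftD f₁ (xhi t) t)
    (hbcH : ∀ t > (0:ℝ), σ ^ 2 / 2 * leftD f₁ xH t = (α₁ xH t - u t) * f₁ xH t)
    -- fixed deadband width
    (δ₀ : ℝ) (hδ₀ : 0 < δ₀) (hwidth : ∀ t ≥ (0:ℝ), xhi t - xlo t = δ₀)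
    -- sign conditions at the deadband boundaries
    (hbc_sign1 : ∀ t > (0:ℝ), 0 < rightD f₁ (xlo t) t)
    (hbc_sign0 : ∀ t > (0:ℝ), leftD f₀ (xhi t) t < 0)
    -- conditions (G1)–(G3) on the net switching flux
    (hG1 : ∀ τ : ℝ, g 0 τ ≤ 0)
    (hG2 : ∀ s : ℝ, 0 ≤ g s 0)
    (hG3 : ∀ s τ : ℝ, |deriv (fun s' => g s' τ) s| + |deriv (fun τ' => g s τ') τ| ≤ 1)
    -- nonnegative (continuous) initial data
    (hIC0 : ∀ x ∈ Icc xL (xhi 0), 0 ≤ f₀ x 0)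
    (hIC1 : ∀ x ∈ Icc (xlo 0) xH, 0 ≤ f₁ x 0) :
    ∀ t ≥ (0:ℝ), ∀ x ∈ Icc xL (xhi t), 0 ≤ f₀ x t :=
  off_state_nonneg_general σ C R xL hσ xlo xhi u xa hu_cont hxa_cont hxlo_deriv hxhi_deriv f₀ f₁ α₀
    g hg hα₀ hf₀_cont_a hf₀_cont_b hf₀_x hf₀_xL hf₀_xloL hf₀_xloR hpde_a hpde_b0 hbcL hbc_jump_lo
    hbc0_hi hbc_sign1 hG1 hG3 hIC0
end

section
/- Consider the coupled Fokker–Planck model of a TCL population, where the net flux function g satisfies conditions (G1)–(G3), and the initial data f₁(·,0) = f₁^{b0} on [x̲(0), x̄(0)] and f₁(·,0) = f₁^{c0} on [x̄(0), x_H] are continuous and nonnegative, as are the initial data for f₀. Then the ON-state density is nonnegative for all time: f₁(x,t) ≥ 0 for all t ≥ 0 and all x ∈ [x̲(t), x_H]. -/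
open Set

/-!
Weighted minimum principle. If `f₁` is negative somewhere in the region `0 ≤ t ≤ T`,
`x̲(t) ≤ x ≤ x_H`, then `W = e^{-βt - Kx} f₁` attains a negative minimum on this compact region.
The minimum cannot lie on `t = 0` (nonnegative initial data) nor on `x = x̲(t)` (where `f₁ = 0`).
At `x = x̄(t)` minimality forces the spatial derivative of `W` to jump upwards, whereas the jump
condition and `∂_x f₀(x̄⁻, t) < 0` make it jump downwards. At `x = x_H` the Robin condition
contradicts one-sided minimality once `σ²K/2` exceeds the drift. At an interior point,
`∂_x W = 0`, `∂_x² W ≥ 0` and `∂_t W ≤ 0`, together with the Fokker–Planck equation and the bound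
`g(s, τ) ≥ -|τ|` from (G2)–(G3), give `(β - A) f₁ ≥ 0` for a constant `A` depending only on
`σ`, `K`, the drift bound and `CR`; choosing `β > A` gives the contradiction.
-/

open Filter Topology Real

theorem HasDerivWithinAt.nonpos_of_isLocalMinOn_Iic {f : ℝ → ℝ} {a d : ℝ}
    (hf : HasDerivWithinAt f d (Iic a) a) (h : IsLocalMinOn f (Iic a) a) : d ≤ 0 := by
  have hcone : (a - 1) - a ∈ posTangentConeAt (Iic a) a :=
    sub_mem_posTangentConeAt_of_segment_subset (by
      rw [segment_symm, segment_eq_Icc (by linarith)]; exact Icc_subset_Iic_self)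
  simpa using h.hasFDerivWithinAt_nonneg hf.hasFDerivWithinAt hcone

theorem HasDerivWithinAt.nonneg_of_isLocalMinOn_Ici {f : ℝ → ℝ} {a d : ℝ}
    (hf : HasDerivWithinAt f d (Ici a) a) (h : IsLocalMinOn f (Ici a) a) : 0 ≤ d := by
  have hcone : (a + 1) - a ∈ posTangentConeAt (Ici a) a :=
    sub_mem_posTangentConeAt_of_segment_subset (by
      rw [segment_eq_Icc (by linarith)]; exact Icc_subset_Ici_self)
  simpa using h.hasFDerivWithinAt_nonneg hf.hasFDerivWithinAt hcone

/-- If the second derivative were negative, the second-derivative test would make `a` also a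
local maximum, so `f` would be locally constant and its second derivative zero. -/
theorem IsLocalMin.nonneg_of_hasDerivAt_deriv {f : ℝ → ℝ} {a c : ℝ} (h : IsLocalMin f a)
    (hf : ContinuousAt f a) (hc : HasDerivAt (deriv f) c a) : 0 ≤ c := by
  by_contra! hneg
  have hmax : IsLocalMax f a :=
    isLocalMax_of_deriv_deriv_neg (by rwa [hc.deriv]) h.deriv_eq_zero hf
  have hconst : f =ᶠ[𝓝 a] fun _ => f a := by
    filter_upwards [h, hmax] with x hx hx' using le_antisymm hx' hx
  have : deriv (deriv f) a = 0 := by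
    rw [(hconst.deriv.trans (by simp : deriv (fun _ => f a) =ᶠ[𝓝 a] fun _ => 0)).deriv_eq]
    simp
  linarith [hc.deriv]

theorem neg_abs_le_of_abs_deriv_le_one {h : ℝ → ℝ} (hd : Differentiable ℝ h)
    (hb : ∀ τ, |deriv h τ| ≤ 1) (h0 : 0 ≤ h 0) (τ : ℝ) : -|τ| ≤ h τ := by
  have hlip : LipschitzWith 1 h :=
    lipschitzWith_of_nnnorm_deriv_le hd fun τ => by simpa [← NNReal.coe_le_coe] using hb τ
  have := hlip.dist_le_mul τ 0
  simp only [NNReal.coe_one, one_mul, Real.dist_eq, sub_zero] at this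
  linarith [(abs_le.mp this).1]

noncomputable def expTilt (K : ℝ) (φ : ℝ → ℝ) (ξ : ℝ) : ℝ :=
  rexp (-(K * ξ)) * φ ξ

section expTilt

variable {φ : ℝ → ℝ} {K a d : ℝ}

theorem hasDerivAt_exp_neg_mul (K a : ℝ) :
    HasDerivAt (fun ξ => rexp (-(K * ξ))) (-K * rexp (-(K * a))) a := by
  simpa [mul_comm] using ((hasDerivAt_id a).const_mul K).neg.exp

theorem hasDerivAt_expTilt (K : ℝ) (hφ : HasDerivAt φ d a) :
    HasDerivAt (expTilt K φ) (rexp (-(K * a)) * (d - K * φ a)) a :=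
  ((hasDerivAt_exp_neg_mul K a).mul hφ).congr_deriv (by ring)

theorem hasDerivWithinAt_expTilt {s : Set ℝ} (K : ℝ) (hφ : HasDerivWithinAt φ d s a) :
    HasDerivWithinAt (expTilt K φ) (rexp (-(K * a)) * (d - K * φ a)) s a :=
  ((hasDerivAt_exp_neg_mul K a).hasDerivWithinAt.mul hφ).congr_deriv (by ring)

theorem HasDerivWithinAt.le_mul_of_isLocalMinOn_Iic_expTilt
    (hφ : HasDerivWithinAt φ d (Iic a) a) (h : IsLocalMinOn (expTilt K φ) (Iic a) a) :
    d ≤ K * φ a := by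
  have := (hasDerivWithinAt_expTilt K hφ).nonpos_of_isLocalMinOn_Iic h
  linarith [nonpos_of_mul_nonpos_right this (exp_pos _)]

theorem HasDerivWithinAt.mul_le_of_isLocalMinOn_Ici_expTilt
    (hφ : HasDerivWithinAt φ d (Ici a) a) (h : IsLocalMinOn (expTilt K φ) (Ici a) a) :
    K * φ a ≤ d := by
  have := (hasDerivWithinAt_expTilt K hφ).nonneg_of_isLocalMinOn_Ici h
  linarith [nonneg_of_mul_nonneg_right this (exp_pos _)]

theorem IsLocalMin.le_of_hasDerivWithinAt_Iic_Ici {dL dR : ℝ} (h : IsLocalMin (expTilt K φ) a)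
    (hL : HasDerivWithinAt φ dL (Iic a) a) (hR : HasDerivWithinAt φ dR (Ici a) a) : dL ≤ dR :=
  (hL.le_mul_of_isLocalMinOn_Iic_expTilt (h.on _)).trans
    (hR.mul_le_of_isLocalMinOn_Ici_expTilt (h.on _))

theorem HasDerivWithinAt.nonneg_of_robin_of_isLocalMinOn_Iic {c m : ℝ}
    (hφ : HasDerivWithinAt φ d (Iic a) a) (h : IsLocalMinOn (expTilt K φ) (Iic a) a)
    (hc : 0 ≤ c) (hrobin : c * d = m * φ a) (hm : m < c * K) : 0 ≤ φ a := by
  have := hφ.le_mul_of_isLocalMinOn_Iic_expTilt h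
  nlinarith

/-- At a local minimum of `e^{-Kx} φ` we have `φ' = Kφ` and `φ'' ≥ K²φ`; this bounds the
derivative of the flux `c φ' - b φ` from below. -/
theorem IsLocalMin.mul_le_of_hasDerivAt_flux {b : ℝ → ℝ} {c b' F : ℝ}
    (h : IsLocalMin (expTilt K φ) a) (hc : 0 < c) (hφ : ∀ᶠ ξ in 𝓝 a, DifferentiableAt ℝ φ ξ)
    (hb : HasDerivAt b b' a) (hF : HasDerivAt (fun ξ => c * deriv φ ξ - b ξ * φ ξ) F a) :
    (c * K ^ 2 - b' - K * b a) * φ a ≤ F := by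
  have hw : deriv (expTilt K φ) =ᶠ[𝓝 a] fun ξ => rexp (-(K * ξ)) * (deriv φ ξ - K * φ ξ) := by
    filter_upwards [hφ] with ξ hξ using (hasDerivAt_expTilt K hξ.hasDerivAt).deriv
  have hφa := hφ.self_of_nhds.hasDerivAt
  have hφ' : deriv φ a = K * φ a := by
    have := hw.eq_of_nhds.symm.trans h.deriv_eq_zero
    linarith [(mul_eq_zero.mp this).resolve_left (exp_pos _).ne']
  have hφ'' : HasDerivAt (deriv φ) ((F + (b' * φ a + b a * deriv φ a)) / c) a := by
    refine ((hF.add (hb.mul hφa)).div_const c).congr_of_eventuallyEq (.of_forall fun ξ => ?_)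
    simp only [Pi.add_apply, Pi.mul_apply]
    field_simp
    ring
  have hw'' := ((hasDerivAt_exp_neg_mul K a).mul
    (hφ''.sub (hφa.const_mul K))).congr_of_eventuallyEq hw
  have := h.nonneg_of_hasDerivAt_deriv (hasDerivAt_expTilt K hφa).continuousAt hw''
  simp only [Pi.sub_apply, hφ', sub_self, mul_zero, zero_add] at this hφ''
  have hS : K ^ 2 * φ a ≤ (F + (b' * φ a + b a * (K * φ a))) / c := by
    nlinarith [exp_pos (-(K * a))]
  rw [le_div_iff₀ hc] at hS
  linarith

end expTilt

theorem nonneg_of_isLocalMin_expTilt_of_hasDerivAt_flux {f : ℝ → ℝ → ℝ} {b : ℝ → ℝ}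
    {x₀ t₀ c K β b' F D : ℝ} (hc : 0 < c) (hK : 0 ≤ K)
    (hx : IsLocalMin (expTilt K (f · t₀)) x₀)
    (ht : IsLocalMinOn (expTilt β (f x₀ ·)) (Iic t₀) t₀)
    (hdiff : ∀ᶠ ξ in 𝓝 x₀, DifferentiableAt ℝ (f · t₀) ξ) (hb : HasDerivAt b b' x₀)
    (hF : HasDerivAt (fun ξ => c * deriv (f · t₀) ξ - b ξ * f ξ t₀) F x₀)
    (hD : HasDerivAt (f x₀ ·) D t₀) (hFD : F + f x₀ t₀ ≤ D)
    (hβ : c * K ^ 2 - b' + K * |b x₀| + 1 < β) : 0 ≤ f x₀ t₀ := by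
  have hspace := hx.mul_le_of_hasDerivAt_flux hc hdiff hb hF
  have htime := HasDerivWithinAt.le_mul_of_isLocalMinOn_Iic_expTilt hD.hasDerivWithinAt ht
  have hKb : -(K * b x₀) ≤ K * |b x₀| := by nlinarith [neg_abs_le (b x₀)]
  by_contra! hneg
  nlinarith

theorem nonneg_of_isMinOn_expTilt_of_pde {f₀ f₁ g : ℝ → ℝ → ℝ} {b : ℝ → ℝ}
    {lo hi H x₀ t₀ c K β b' : ℝ} (hc : 0 < c) (hK : 0 ≤ K) (hlohi : lo < hi) (hhiH : hi < H)
    (hx₀ : x₀ ∈ Icc lo H) (hx : IsMinOn (expTilt K (f₁ · t₀)) (Icc lo H) x₀)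
    (ht : x₀ ∈ Ioo lo H → IsLocalMinOn (expTilt β (f₁ x₀ ·)) (Iic t₀) t₀)
    (hb : HasDerivAt b b' x₀) (hβ : c * K ^ 2 - b' + K * |b x₀| + 1 < β) (hbH : b H < c * K)
    (hg : ∀ s τ, -|τ| ≤ g s τ)
    (hdiff : ∀ x ∈ Ioo lo hi ∪ Ioo hi H, DifferentiableAt ℝ (f₁ · t₀) x)
    (hdiff_hiL : DifferentiableWithinAt ℝ (f₁ · t₀) (Iic hi) hi)
    (hdiff_hiR : DifferentiableWithinAt ℝ (f₁ · t₀) (Ici hi) hi)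
    (hdiff_H : DifferentiableWithinAt ℝ (f₁ · t₀) (Iic H) H)
    (hpde_b : ∀ x ∈ Ioo lo hi, ∃ F,
      HasDerivAt (fun ξ => c * deriv (f₁ · t₀) ξ - b ξ * f₁ ξ t₀) F x ∧
      HasDerivAt (f₁ x ·) (F + g (f₀ x t₀) (f₁ x t₀)) t₀)
    (hpde_c : ∀ x ∈ Ioo hi H, ∃ F,
      HasDerivAt (fun ξ => c * deriv (f₁ · t₀) ξ - b ξ * f₁ ξ t₀) F x ∧
      HasDerivAt (f₁ x ·) F t₀)
    (hlo : f₁ lo t₀ = 0) (hjump : rightD f₁ hi t₀ = leftD f₀ hi t₀ + leftD f₁ hi t₀)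
    (hsign : leftD f₀ hi t₀ < 0) (hrobin : c * leftD f₁ H t₀ = b H * f₁ H t₀) :
    0 ≤ f₁ x₀ t₀ := by
  by_contra! hneg
  rcases hx₀.1.eq_or_lt with rfl | hlo_x₀
  · exact hneg.ne hlo
  have interior : ∀ {l r F h}, x₀ ∈ Ioo l r → Ioo l r ⊆ Ioo lo H →
      (∀ x ∈ Ioo l r, DifferentiableAt ℝ (f₁ · t₀) x) →
      HasDerivAt (fun ξ => c * deriv (f₁ · t₀) ξ - b ξ * f₁ ξ t₀) F x₀ →
      HasDerivAt (f₁ x₀ ·) (F + h) t₀ → f₁ x₀ t₀ ≤ h → False :=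
    fun hlr hsub hdiff hF hD hh => hneg.not_ge <|
      nonneg_of_isLocalMin_expTilt_of_hasDerivAt_flux hc hK
        (hx.isLocalMin (Icc_mem_nhds (hsub hlr).1 (hsub hlr).2)) (ht (hsub hlr))
        (eventually_of_mem (isOpen_Ioo.mem_nhds hlr) hdiff) hb hF hD (by linarith) hβ
  rcases lt_trichotomy x₀ hi with hx₀_hi | rfl | hhi_x₀
  · obtain ⟨F, hF, hD⟩ := hpde_b x₀ ⟨hlo_x₀, hx₀_hi⟩
    refine interior ⟨hlo_x₀, hx₀_hi⟩ (Ioo_subset_Ioo_right hhiH.le)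
      (fun x hx => hdiff x (Or.inl hx)) hF hD ?_
    simpa [abs_of_neg hneg] using hg (f₀ x₀ t₀) (f₁ x₀ t₀)
  · have : leftD f₁ x₀ t₀ ≤ rightD f₁ x₀ t₀ :=
      (hx.isLocalMin (Icc_mem_nhds hlo_x₀ hhiH)).le_of_hasDerivWithinAt_Iic_Ici
        hdiff_hiL.hasDerivWithinAt hdiff_hiR.hasDerivWithinAt
    linarith
  rcases hx₀.2.lt_or_eq with hH | rfl
  · obtain ⟨F, hF, hD⟩ := hpde_c x₀ ⟨hhi_x₀, hH⟩
    exact interior ⟨hhi_x₀, hH⟩ (Ioo_subset_Ioo_left hlohi.le) (fun x hx => hdiff x (Or.inr hx))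
      hF (by simpa using hD) hneg.le
  · exact hneg.not_ge (HasDerivWithinAt.nonneg_of_robin_of_isLocalMinOn_Iic (φ := (f₁ · t₀))
      hdiff_H.hasDerivWithinAt (IsMinFilter.filter_mono hx
        (le_principal_iff.mpr (Icc_mem_nhdsLE hlo_x₀))) hc.le hrobin hbH)

def spaceTimeRegion (s : Set ℝ) (φ ψ : ℝ → ℝ) : Set (ℝ × ℝ) :=
  {p | p.2 ∈ s ∧ p.1 ∈ Icc (φ p.2) (ψ p.2)}

section spaceTimeRegion

variable {s : Set ℝ} {φ χ ψ : ℝ → ℝ}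

theorem isCompact_spaceTimeRegion (hs : IsCompact s) (hφ : ContinuousOn φ s)
    (hψ : ContinuousOn ψ s) : IsCompact (spaceTimeRegion s φ ψ) := by
  obtain ⟨m, hm⟩ := hs.bddBelow_image hφ
  obtain ⟨M, hM⟩ := hs.bddAbove_image hψ
  refine (isCompact_Icc.prod hs).of_isClosed_subset ?_ fun p hp =>
    ⟨⟨(hm ⟨_, hp.1, rfl⟩).trans hp.2.1, hp.2.2.trans (hM ⟨_, hp.1, rfl⟩)⟩, hp.1⟩
  have hsnd : ContinuousOn Prod.snd (univ ×ˢ s : Set (ℝ × ℝ)) := continuous_snd.continuousOn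
  have hcont : ContinuousOn (fun p : ℝ × ℝ => (p.1 - φ p.2, ψ p.2 - p.1)) (univ ×ˢ s) :=
    (continuous_fst.continuousOn.sub (hφ.comp hsnd fun p hp => hp.2)).prodMk
      ((hψ.comp hsnd fun p hp => hp.2).sub continuous_fst.continuousOn)
  convert hcont.preimage_isClosed_of_isClosed (isClosed_univ.prod hs.isClosed)
    ((isClosed_Ici (a := 0)).prod (isClosed_Ici (a := 0))) using 1
  ext p
  simp [spaceTimeRegion, sub_nonneg, and_comm]

theorem spaceTimeRegion_union (hφχ : ∀ t ∈ s, φ t ≤ χ t) (hχψ : ∀ t ∈ s, χ t ≤ ψ t) :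
    spaceTimeRegion s φ χ ∪ spaceTimeRegion s χ ψ = spaceTimeRegion s φ ψ := by
  ext ⟨x, t⟩
  simp only [spaceTimeRegion, mem_union, mem_ofPred_eq, mem_Icc]
  constructor
  · rintro (⟨ht, h₁, h₂⟩ | ⟨ht, h₁, h₂⟩)
    exacts [⟨ht, h₁, h₂.trans (hχψ t ht)⟩, ⟨ht, (hφχ t ht).trans h₁, h₂⟩]
  · rintro ⟨ht, h₁, h₂⟩
    rcases le_total x (χ t) with h | h
    exacts [Or.inl ⟨ht, h₁, h⟩, Or.inr ⟨ht, h, h₂⟩]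

end spaceTimeRegion

noncomputable def expWeight (K β : ℝ) (f : ℝ → ℝ → ℝ) (p : ℝ × ℝ) : ℝ :=
  rexp (-(β * p.2)) * expTilt K (f · p.2) p.1

section expWeight

variable {K β : ℝ} {f : ℝ → ℝ → ℝ} {s : Set ℝ} {φ χ ψ : ℝ → ℝ} {x₀ t₀ : ℝ}

theorem expWeight_neg_iff {p : ℝ × ℝ} : expWeight K β f p < 0 ↔ f p.1 p.2 < 0 := by
  simp only [expWeight, expTilt, mul_neg_iff, exp_pos, true_and, (exp_pos _).not_gt, false_and,
    or_false]

theorem IsMinOn.expTilt_fst (h : IsMinOn (expWeight K β f) (spaceTimeRegion s φ ψ) (x₀, t₀))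
    (ht₀ : t₀ ∈ s) : IsMinOn (expTilt K (f · t₀)) (Icc (φ t₀) (ψ t₀)) x₀ :=
  isMinOn_iff.mpr fun ξ hξ =>
    le_of_mul_le_mul_left (isMinOn_iff.mp h (ξ, t₀) ⟨ht₀, hξ⟩) (exp_pos _)

theorem IsMinOn.isLocalMinOn_expTilt_snd
    (h : IsMinOn (expWeight K β f) (spaceTimeRegion s φ ψ) (x₀, t₀)) (hs : s ∈ 𝓝[≤] t₀)
    (hφ : ContinuousAt φ t₀) (hψ : ContinuousAt ψ t₀) (hx₀ : x₀ ∈ Ioo (φ t₀) (ψ t₀)) :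
    IsLocalMinOn (expTilt β (f x₀ ·)) (Iic t₀) t₀ := by
  filter_upwards [hs, nhdsWithin_le_nhds (hφ.eventually_lt continuousAt_const hx₀.1),
    nhdsWithin_le_nhds (continuousAt_const.eventually_lt hψ hx₀.2)] with τ hτ hφτ hψτ
  refine le_of_mul_le_mul_left ?_ (exp_pos (-(K * x₀)))
  simpa only [expWeight, expTilt, mul_left_comm] using
    isMinOn_iff.mp h (x₀, τ) ⟨hτ, hφτ.le, hψτ.le⟩

theorem exists_isMinOn_expWeight (K β : ℝ) (hs : IsCompact s) (hφ : ContinuousOn φ s)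
    (hχ : ContinuousOn χ s) (hψ : ContinuousOn ψ s)
    (hφχ : ∀ t ∈ s, φ t ≤ χ t) (hχψ : ∀ t ∈ s, χ t ≤ ψ t)
    (hf₁ : ContinuousOn (fun p : ℝ × ℝ => f p.1 p.2) (spaceTimeRegion s φ χ))
    (hf₂ : ContinuousOn (fun p : ℝ × ℝ => f p.1 p.2) (spaceTimeRegion s χ ψ))
    (hne : (spaceTimeRegion s φ ψ).Nonempty) :
    ∃ p ∈ spaceTimeRegion s φ ψ, IsMinOn (expWeight K β f) (spaceTimeRegion s φ ψ) p := by
  have hweight : ∀ S, ContinuousOn (fun p : ℝ × ℝ => f p.1 p.2) S →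
      ContinuousOn (expWeight K β f) S := fun S hf =>
    (by fun_prop : Continuous fun p : ℝ × ℝ => rexp (-(β * p.2))).continuousOn.mul
      ((by fun_prop : Continuous fun p : ℝ × ℝ => rexp (-(K * p.1))).continuousOn.mul hf)
  have h₁ := isCompact_spaceTimeRegion hs hφ hχ
  have h₂ := isCompact_spaceTimeRegion hs hχ hψ
  rw [← spaceTimeRegion_union hφχ hχψ] at hne ⊢
  exact (h₁.union h₂).exists_isMinOn hne
    ((hweight _ hf₁).union_of_isClosed (hweight _ hf₂) h₁.isClosed h₂.isClosed)

end expWeight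

theorem hasDerivAt_drift (xa u : ℝ → ℝ) (c d t x : ℝ) :
    HasDerivAt (fun ξ => (xa t - ξ - c) / d - u t) (-d⁻¹) x :=
  ((((hasDerivAt_id x).const_sub _).sub_const _).div_const _).sub_const _ |>.congr_deriv (by ring)

theorem exists_abs_drift_le {xa u : ℝ → ℝ} {Ω : Set (ℝ × ℝ)} (c d : ℝ) (hΩ : IsCompact Ω)
    (hΩ₀ : ∀ p ∈ Ω, 0 ≤ p.2) (hxa : ContinuousOn xa (Ici 0)) (hu : ContinuousOn u (Ici 0)) :
    ∃ M, ∀ p ∈ Ω, |(xa p.2 - p.1 - c) / d - u p.2| ≤ M := by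
  have hsnd : MapsTo Prod.snd Ω (Ici 0) := hΩ₀
  simpa only [Real.norm_eq_abs] using hΩ.exists_bound_of_continuousOn
    (f := fun p : ℝ × ℝ => (xa p.2 - p.1 - c) / d - u p.2)
    ((((hxa.comp continuous_snd.continuousOn hsnd).sub continuous_fst.continuousOn).sub
      continuousOn_const).div_const d |>.sub (hu.comp continuous_snd.continuousOn hsnd))

theorem on_state_nonneg_general
    (σ C R P xL xH : ℝ)
    (hσ : 0 < σ)
    (xlo xhi u xa : ℝ → ℝ)
    (hu_cont : ContinuousOn u (Ici 0)) (hxa_cont : ContinuousOn xa (Ici 0))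
    (hrange : ∀ t ≥ (0:ℝ), xL < xlo t ∧ xlo t < xhi t ∧ xhi t < xH)
    (hxlo_deriv : ∀ t ≥ (0:ℝ), HasDerivAt xlo (u t) t)
    (hxhi_deriv : ∀ t ≥ (0:ℝ), HasDerivAt xhi (u t) t)
    (f₀ f₁ α₁ : ℝ → ℝ → ℝ) (g : ℝ → ℝ → ℝ)
    (hg : ContDiff ℝ 1 (fun p : ℝ × ℝ => g p.1 p.2))
    (hα₁ : ∀ x t, α₁ x t = (xa t - x - R * P) / (C * R))
    -- continuity up to the closures of the four space-time regions
    (hf₁_cont_b : ContinuousOn (fun p : ℝ × ℝ => f₁ p.1 p.2)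
      {p : ℝ × ℝ | 0 ≤ p.2 ∧ xlo p.2 ≤ p.1 ∧ p.1 ≤ xhi p.2})
    (hf₁_cont_c : ContinuousOn (fun p : ℝ × ℝ => f₁ p.1 p.2)
      {p : ℝ × ℝ | 0 ≤ p.2 ∧ xhi p.2 ≤ p.1 ∧ p.1 ≤ xH})
    -- spatial differentiability in the interiors of the regions
    (hf₁_x : ∀ t > (0:ℝ), ∀ x ∈ Ioo (xlo t) (xhi t) ∪ Ioo (xhi t) xH,
      DifferentiableAt ℝ (fun ξ => f₁ ξ t) x)
    -- existence of the one-sided spatial derivatives (conditions (F2), (F3))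
    (hf₁_xhiL : ∀ t > (0:ℝ), DifferentiableWithinAt ℝ (fun ξ => f₁ ξ t) (Iic (xhi t)) (xhi t))
    (hf₁_xhiR : ∀ t > (0:ℝ), DifferentiableWithinAt ℝ (fun ξ => f₁ ξ t) (Ici (xhi t)) (xhi t))
    (hf₁_xH : ∀ t > (0:ℝ), DifferentiableWithinAt ℝ (fun ξ => f₁ ξ t) (Iic xH) xH)
    -- the four coupled Fokker–Planck equations
    (hpde_b1 : ∀ t > (0:ℝ), ∀ x ∈ Ioo (xlo t) (xhi t), ∃ Fx : ℝ,
      HasDerivAt (fun ξ => σ ^ 2 / 2 * deriv (fun ζ => f₁ ζ t) ξ - (α₁ ξ t - u t) * f₁ ξ t)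
        Fx x ∧
      HasDerivAt (fun τ => f₁ x τ) (Fx + g (f₀ x t) (f₁ x t)) t)
    (hpde_c : ∀ t > (0:ℝ), ∀ x ∈ Ioo (xhi t) xH, ∃ Fx : ℝ,
      HasDerivAt (fun ξ => σ ^ 2 / 2 * deriv (fun ζ => f₁ ζ t) ξ - (α₁ ξ t - u t) * f₁ ξ t)
        Fx x ∧
      HasDerivAt (fun τ => f₁ x τ) Fx t)
    -- boundary conditions
    (hbc1_lo : ∀ t > (0:ℝ), f₁ (xlo t) t = 0)
    (hbc_jump_hi : ∀ t > (0:ℝ),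
      rightD f₁ (xhi t) t = leftD f₀ (xhi t) t + leftD f₁ (xhi t) t)
    (hbcH : ∀ t > (0:ℝ), σ ^ 2 / 2 * leftD f₁ xH t = (α₁ xH t - u t) * f₁ xH t)
    -- sign conditions at the deadband boundaries
    (hbc_sign0 : ∀ t > (0:ℝ), leftD f₀ (xhi t) t < 0)
    -- conditions (G1)–(G3) on the net switching flux
    (hG2 : ∀ s : ℝ, 0 ≤ g s 0)
    (hG3 : ∀ s τ : ℝ, |deriv (fun s' => g s' τ) s| + |deriv (fun τ' => g s τ') τ| ≤ 1)
    -- nonnegative (continuous) initial data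
    (hIC1 : ∀ x ∈ Icc (xlo 0) xH, 0 ≤ f₁ x 0) :
    ∀ t ≥ (0:ℝ), ∀ x ∈ Icc (xlo t) xH, 0 ≤ f₁ x t := by
  intro T hT x₀ hx₀
  by_contra! hneg
  have hxlo_cont : ContinuousOn xlo (Icc 0 T) :=
    fun t ht => (hxlo_deriv t ht.1).continuousAt.continuousWithinAt
  have hxhi_cont : ContinuousOn xhi (Icc 0 T) :=
    fun t ht => (hxhi_deriv t ht.1).continuousAt.continuousWithinAt
  set Ω := spaceTimeRegion (Icc 0 T) xlo fun _ => xH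
  have hx₀Ω : (x₀, T) ∈ Ω := ⟨⟨hT, le_rfl⟩, hx₀⟩
  obtain ⟨M, hM⟩ := exists_abs_drift_le (R * P) (C * R)
    (isCompact_spaceTimeRegion isCompact_Icc hxlo_cont continuousOn_const) (fun p hp => hp.1.1)
    hxa_cont hu_cont
  simp only [← hα₁] at hM
  have hM₀ : 0 ≤ M := (abs_nonneg _).trans (hM _ hx₀Ω)
  set K := 2 * (M + 1) / σ ^ 2 with hK
  have hK₀ : 0 ≤ K := by positivity
  have hσK : σ ^ 2 / 2 * K = M + 1 := by rw [hK]; field_simp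
  set β := σ ^ 2 / 2 * K ^ 2 + (C * R)⁻¹ + K * M + 2 with hβ
  obtain ⟨⟨xs, ts⟩, ⟨hts, hxs⟩, hmin⟩ := exists_isMinOn_expWeight (f := f₁) K β isCompact_Icc
    hxlo_cont hxhi_cont continuousOn_const (fun t ht => (hrange t ht.1).2.1.le)
    (fun t ht => (hrange t ht.1).2.2.le) (hf₁_cont_b.mono fun p hp => ⟨hp.1.1, hp.2⟩)
    (hf₁_cont_c.mono fun p hp => ⟨hp.1.1, hp.2⟩) ⟨_, hx₀Ω⟩
  have hneg' : f₁ xs ts < 0 := expWeight_neg_iff.mp <|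
    (isMinOn_iff.mp hmin _ hx₀Ω).trans_lt (expWeight_neg_iff.mpr hneg)
  obtain rfl | hts0 := hts.1.eq_or_lt
  · exact hneg'.not_ge (hIC1 xs hxs)
  obtain ⟨-, hlohi, hhiH⟩ := hrange ts hts.1
  refine hneg'.not_ge (nonneg_of_isMinOn_expTilt_of_pde (f₀ := f₀) (g := g)
    (b := fun ξ => α₁ ξ ts - u ts) (by positivity) hK₀ hlohi hhiH hxs (hmin.expTilt_fst hts)
    (hmin.isLocalMinOn_expTilt_snd (Icc_mem_nhdsLE_of_mem ⟨hts0, hts.2⟩)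
      (hxlo_deriv ts hts.1).continuousAt continuousAt_const)
    (by simpa only [hα₁] using hasDerivAt_drift xa u (R * P) (C * R) ts xs)
    (by linarith [mul_le_mul_of_nonneg_left (hM (xs, ts) ⟨hts, hxs⟩) hK₀])
    (by linarith [(abs_le.mp (hM (xH, ts) ⟨hts, hlohi.le.trans hhiH.le, le_rfl⟩)).2])
    (fun s τ => neg_abs_le_of_abs_deriv_le_one
      ((hg.differentiable one_ne_zero).comp ((differentiable_const s).prodMk differentiable_id))
      (fun τ => (le_add_of_nonneg_left (abs_nonneg _)).trans (hG3 s τ)) (hG2 s) τ)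
    (hf₁_x ts hts0) (hf₁_xhiL ts hts0) (hf₁_xhiR ts hts0) (hf₁_xH ts hts0) (hpde_b1 ts hts0)
    (hpde_c ts hts0) (hbc1_lo ts hts0) (hbc_jump_hi ts hts0) (hbc_sign0 ts hts0) (hbcH ts hts0))

/-- non-negativeness of the ON-state density: for the coupled
Fokker–Planck model of a TCL population, with the net switching flux `g`
satisfying conditions (G1)–(G3) and nonnegative continuous initial data, the
ON-state density satisfies `f₁(x,t) ≥ 0` for all `t ≥ 0` and `x ∈ [x̲(t), x_H]`. -/
theorem on_state_nonneg
    (σ C R P xL xH : ℝ)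
    (hσ : 0 < σ) (hC : 0 < C) (hR : 0 < R) (hP : 0 < P) (hLH : xL < xH)
    (xlo xhi u xa : ℝ → ℝ)
    (hu_cont : ContinuousOn u (Ici 0)) (hxa_cont : ContinuousOn xa (Ici 0))
    (hrange : ∀ t ≥ (0:ℝ), xL < xlo t ∧ xlo t < xhi t ∧ xhi t < xH)
    (hxlo_deriv : ∀ t ≥ (0:ℝ), HasDerivAt xlo (u t) t)
    (hxhi_deriv : ∀ t ≥ (0:ℝ), HasDerivAt xhi (u t) t)
    (f₀ f₁ α₀ α₁ : ℝ → ℝ → ℝ) (g : ℝ → ℝ → ℝ)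
    (hg : ContDiff ℝ 1 (fun p : ℝ × ℝ => g p.1 p.2))
    (hα₀ : ∀ x t, α₀ x t = (xa t - x) / (C * R))
    (hα₁ : ∀ x t, α₁ x t = (xa t - x - R * P) / (C * R))
    -- continuity up to the closures of the four space-time regions
    (hf₀_cont_a : ContinuousOn (fun p : ℝ × ℝ => f₀ p.1 p.2)
      {p : ℝ × ℝ | 0 ≤ p.2 ∧ xL ≤ p.1 ∧ p.1 ≤ xlo p.2})
    (hf₀_cont_b : ContinuousOn (fun p : ℝ × ℝ => f₀ p.1 p.2)
      {p : ℝ × ℝ | 0 ≤ p.2 ∧ xlo p.2 ≤ p.1 ∧ p.1 ≤ xhi p.2})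
    (hf₁_cont_b : ContinuousOn (fun p : ℝ × ℝ => f₁ p.1 p.2)
      {p : ℝ × ℝ | 0 ≤ p.2 ∧ xlo p.2 ≤ p.1 ∧ p.1 ≤ xhi p.2})
    (hf₁_cont_c : ContinuousOn (fun p : ℝ × ℝ => f₁ p.1 p.2)
      {p : ℝ × ℝ | 0 ≤ p.2 ∧ xhi p.2 ≤ p.1 ∧ p.1 ≤ xH})
    -- spatial differentiability in the interiors of the regions
    (hf₀_x : ∀ t > (0:ℝ), ∀ x ∈ Ioo xL (xlo t) ∪ Ioo (xlo t) (xhi t),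
      DifferentiableAt ℝ (fun ξ => f₀ ξ t) x)
    (hf₁_x : ∀ t > (0:ℝ), ∀ x ∈ Ioo (xlo t) (xhi t) ∪ Ioo (xhi t) xH,
      DifferentiableAt ℝ (fun ξ => f₁ ξ t) x)
    -- existence of the one-sided spatial derivatives (conditions (F2), (F3))
    (hf₀_xL : ∀ t > (0:ℝ), DifferentiableWithinAt ℝ (fun ξ => f₀ ξ t) (Ici xL) xL)
    (hf₀_xloL : ∀ t > (0:ℝ), DifferentiableWithinAt ℝ (fun ξ => f₀ ξ t) (Iic (xlo t)) (xlo t))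
    (hf₀_xloR : ∀ t > (0:ℝ), DifferentiableWithinAt ℝ (fun ξ => f₀ ξ t) (Ici (xlo t)) (xlo t))
    (hf₀_xhiL : ∀ t > (0:ℝ), DifferentiableWithinAt ℝ (fun ξ => f₀ ξ t) (Iic (xhi t)) (xhi t))
    (hf₁_xloR : ∀ t > (0:ℝ), DifferentiableWithinAt ℝ (fun ξ => f₁ ξ t) (Ici (xlo t)) (xlo t))
    (hf₁_xhiL : ∀ t > (0:ℝ), DifferentiableWithinAt ℝ (fun ξ => f₁ ξ t) (Iic (xhi t)) (xhi t))
    (hf₁_xhiR : ∀ t > (0:ℝ), DifferentiableWithinAt ℝ (fun ξ => f₁ ξ t) (Ici (xhi t)) (xhi t))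
    (hf₁_xH : ∀ t > (0:ℝ), DifferentiableWithinAt ℝ (fun ξ => f₁ ξ t) (Iic xH) xH)
    -- the four coupled Fokker–Planck equations
    (hpde_a : ∀ t > (0:ℝ), ∀ x ∈ Ioo xL (xlo t), ∃ Fx : ℝ,
      HasDerivAt (fun ξ => σ ^ 2 / 2 * deriv (fun ζ => f₀ ζ t) ξ - (α₀ ξ t - u t) * f₀ ξ t)
        Fx x ∧
      HasDerivAt (fun τ => f₀ x τ) Fx t)
    (hpde_b0 : ∀ t > (0:ℝ), ∀ x ∈ Ioo (xlo t) (xhi t), ∃ Fx : ℝ,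
      HasDerivAt (fun ξ => σ ^ 2 / 2 * deriv (fun ζ => f₀ ζ t) ξ - (α₀ ξ t - u t) * f₀ ξ t)
        Fx x ∧
      HasDerivAt (fun τ => f₀ x τ) (Fx - g (f₀ x t) (f₁ x t)) t)
    (hpde_b1 : ∀ t > (0:ℝ), ∀ x ∈ Ioo (xlo t) (xhi t), ∃ Fx : ℝ,
      HasDerivAt (fun ξ => σ ^ 2 / 2 * deriv (fun ζ => f₁ ζ t) ξ - (α₁ ξ t - u t) * f₁ ξ t)
        Fx x ∧
      HasDerivAt (fun τ => f₁ x τ) (Fx + g (f₀ x t) (f₁ x t)) t)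
    (hpde_c : ∀ t > (0:ℝ), ∀ x ∈ Ioo (xhi t) xH, ∃ Fx : ℝ,
      HasDerivAt (fun ξ => σ ^ 2 / 2 * deriv (fun ζ => f₁ ζ t) ξ - (α₁ ξ t - u t) * f₁ ξ t)
        Fx x ∧
      HasDerivAt (fun τ => f₁ x τ) Fx t)
    -- boundary conditions
    (hbcL : ∀ t > (0:ℝ), σ ^ 2 / 2 * rightD f₀ xL t = (α₀ xL t - u t) * f₀ xL t)
    (hbc_jump_lo : ∀ t > (0:ℝ),
      leftD f₀ (xlo t) t = rightD f₀ (xlo t) t + rightD f₁ (xlo t) t)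
    (hbc0_hi : ∀ t > (0:ℝ), f₀ (xhi t) t = 0)
    (hbc1_lo : ∀ t > (0:ℝ), f₁ (xlo t) t = 0)
    (hbc_jump_hi : ∀ t > (0:ℝ),
      rightD f₁ (xhi t) t = leftD f₀ (xhi t) t + leftD f₁ (xhi t) t)
    (hbcH : ∀ t > (0:ℝ), σ ^ 2 / 2 * leftD f₁ xH t = (α₁ xH t - u t) * f₁ xH t)
    -- fixed deadband width
    (δ₀ : ℝ) (hδ₀ : 0 < δ₀) (hwidth : ∀ t ≥ (0:ℝ), xhi t - xlo t = δ₀)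
    -- sign conditions at the deadband boundaries
    (hbc_sign1 : ∀ t > (0:ℝ), 0 < rightD f₁ (xlo t) t)
    (hbc_sign0 : ∀ t > (0:ℝ), leftD f₀ (xhi t) t < 0)
    -- conditions (G1)–(G3) on the net switching flux
    (hG1 : ∀ τ : ℝ, g 0 τ ≤ 0)
    (hG2 : ∀ s : ℝ, 0 ≤ g s 0)
    (hG3 : ∀ s τ : ℝ, |deriv (fun s' => g s' τ) s| + |deriv (fun τ' => g s τ') τ| ≤ 1)
    -- nonnegative (continuous) initial data
    (hIC0 : ∀ x ∈ Icc xL (xhi 0), 0 ≤ f₀ x 0)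
    (hIC1 : ∀ x ∈ Icc (xlo 0) xH, 0 ≤ f₁ x 0) :
    ∀ t ≥ (0:ℝ), ∀ x ∈ Icc (xlo t) xH, 0 ≤ f₁ x t :=
  on_state_nonneg_general σ C R P xL xH hσ xlo xhi u xa hu_cont hxa_cont hrange hxlo_deriv
    hxhi_deriv f₀ f₁ α₁ g hg hα₁ hf₁_cont_b hf₁_cont_c hf₁_x hf₁_xhiL hf₁_xhiR hf₁_xH hpde_b1 hpde_c
    hbc1_lo hbc_jump_hi hbcH hbc_sign0 hG2 hG3 hIC1
end
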